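/- arXiv:1212.0360 — 10 statements merged into one kernel-verified Lean document; each statement's English description precedes it below -/
import Mathlib

section
/- Let A be a bounded antilinear operator on a complex Hilbert space H. Then the spectrum σ(A) (the set of λ ∈ ℂ such that λI − A is not boundedly invertible as a real-linear operator) is circularly symmetric with respect to the origin. -/
/-!
If `A` is antilinear and `|u| = 1`, conjugating `λ - A` by the invertible scalar operator `u`
gives `u (λ - A) u = u² λ - u ū A = u² λ - A`, since `A` turns the `u` on its right into `ū` on
its left. Hence `λ - A` and `u² λ - A` are invertible together; take `u = exp (i θ / 2)`.
-/

open Complex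

section Antilinear

variable {E : Type*} [NormedAddCommGroup E] [NormedSpace ℂ E]

theorem isUnit_smul_one {u : ℂ} (hu : u ≠ 0) : IsUnit (u • (1 : E →L[ℝ] E)) :=
  isUnit_iff_exists.2 ⟨u⁻¹ • 1, by ext x; simp [smul_smul, hu], by ext x; simp [smul_smul, hu]⟩

theorem smul_one_mul_smul_one_sub_mul_smul_one {A : E →L[ℝ] E}
    (hA : ∀ (c : ℂ) (x : E), A (c • x) = starRingEnd ℂ c • A x)
    {u : ℂ} (hu : u * starRingEnd ℂ u = 1) (l : ℂ) :
    (u • 1) * (l • 1 - A) * (u • 1) = (u * u * l) • (1 : E →L[ℝ] E) - A := by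
  ext x
  simp only [mul_apply_eq_comp, smul_apply, one_apply_eq_self, sub_apply, smul_smul, hA,
    smul_sub, hu, one_smul, sub_left_inj]
  ring_nf

theorem isUnit_smul_one_sub_iff_of_norm_eq_one {A : E →L[ℝ] E}
    (hA : ∀ (c : ℂ) (x : E), A (c • x) = starRingEnd ℂ c • A x)
    {u : ℂ} (hu : ‖u‖ = 1) (l : ℂ) :
    IsUnit ((u * u * l) • (1 : E →L[ℝ] E) - A) ↔ IsUnit (l • 1 - A) := by
  have hu₀ : u ≠ 0 := norm_ne_zero_iff.1 (hu ▸ one_ne_zero)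
  have hconj : u * starRingEnd ℂ u = 1 := by
    rw [mul_conj, normSq_eq_norm_sq, hu]; norm_num
  rw [← smul_one_mul_smul_one_sub_mul_smul_one hA hconj, (isUnit_smul_one hu₀).mul_right_iff,
    (isUnit_smul_one hu₀).mul_left_iff]

end Antilinear

theorem stmt2_general {H : Type*} [NormedAddCommGroup H] [InnerProductSpace ℂ H]
    (A : H →L[ℝ] H)
    (hA : ∀ (c : ℂ) (x : H), A (c • x) = (starRingEnd ℂ c) • A x)
    (l : ℂ)
    (hl : ¬ IsUnit (l • (ContinuousLinearMap.id ℝ H) - A)) (θ : ℝ) :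
    ¬ IsUnit ((Complex.exp (θ * Complex.I) * l) • (ContinuousLinearMap.id ℝ H) - A) := by
  set u := exp ((θ / 2 : ℝ) * I)
  have hsq : u * u = exp (θ * I) := by
    rw [← exp_add]; push_cast; ring_nf
  rwa [← ContinuousLinearMap.one_def, ← hsq,
    isUnit_smul_one_sub_iff_of_norm_eq_one hA (norm_exp_ofReal_mul_I _)]

/-- The spectrum of a bounded antilinear operator (as a real-linear operator)
is circularly symmetric with respect to the origin. -/
theorem stmt2 {H : Type*} [NormedAddCommGroup H] [InnerProductSpace ℂ H] [CompleteSpace H]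
    (A : H →L[ℝ] H)
    (hA : ∀ (c : ℂ) (x : H), A (c • x) = (starRingEnd ℂ c) • A x)
    (l : ℂ)
    (hl : ¬ IsUnit (l • (ContinuousLinearMap.id ℝ H) - A)) (θ : ℝ) :
    ¬ IsUnit ((Complex.exp (θ * Complex.I) * l) • (ContinuousLinearMap.id ℝ H) - A) :=
  stmt2_general A hA l hl θ
end

section
/- Let A be a bounded antilinear operator on a complex Hilbert space H. Then λ ∈ σ(A) if and only if |λ|² ∈ σ(A²), where A² is a bounded complex linear operator. -/
/-!
Put `F = λ - A` and `G = conj λ + A`. Antilinearity of `A` gives `F G = G F = |λ|² - A²`, so this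
commuting product is bijective iff both factors are. Choosing `ν` with `|ν| = 1` and
`ν² λ = -conj λ`, antilinearity also gives `G = -ν F ν`, so `G` is bijective as soon as `F` is.
By the open mapping theorem, bijectivity is invertibility for bounded operators on a Banach space.
-/

open Complex ComplexConjugate

theorem Complex.exists_mul_conj_eq_one_and_sq_mul_eq_neg_conj (l : ℂ) :
    ∃ ν : ℂ, ν * conj ν = 1 ∧ ν ^ 2 * l = -conj l := by
  rcases eq_or_ne l 0 with rfl | hl
  · exact ⟨1, by simp, by simp⟩
  have hnorm : (‖l‖ : ℂ) ≠ 0 := by exact_mod_cast norm_ne_zero_iff.mpr hl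
  have hsq : (‖l‖ : ℂ) ^ 2 = l * conj l := by
    rw [mul_conj, normSq_eq_norm_sq]; push_cast; ring
  refine ⟨I * conj l / ‖l‖, ?_, ?_⟩
  · simp only [map_div₀, map_mul, conj_I, conj_conj, conj_ofReal]
    field_simp
    linear_combination (-1 : ℂ) * hsq - (l * conj l) * I_sq
  · field_simp
    linear_combination (conj l) * hsq + (l * conj l ^ 2) * I_sq

namespace LinearMap

variable {E : Type*} [AddCommGroup E] [Module ℂ E] (A : E →ₗ⋆[ℂ] E) (l : ℂ)

theorem conj_smul_add_apply_smul_sub (x : E) :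
    conj l • (l • x - A x) + A (l • x - A x) = (normSq l : ℂ) • x - A (A x) := by
  rw [← mul_conj, map_sub, map_smulₛₗ, smul_sub, smul_smul, mul_comm]
  abel

theorem smul_sub_apply_conj_smul_add (x : E) :
    l • (conj l • x + A x) - A (conj l • x + A x) = (normSq l : ℂ) • x - A (A x) := by
  rw [← mul_conj, map_add, map_smulₛₗ, conj_conj, smul_add, smul_smul]
  abel

theorem conj_smul_add_eq_neg_smul_smul_sub {ν : ℂ} (hν : ν * conj ν = 1)
    (hνl : ν ^ 2 * l = -conj l) (x : E) :
    conj l • x + A x = -(ν • (l • (ν • x) - A (ν • x))) := by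
  rw [map_smulₛₗ, smul_sub, smul_smul, smul_smul, smul_smul, hν, one_smul,
    show ν * l * ν = ν ^ 2 * l by ring, hνl, neg_smul]
  abel

theorem bijective_conj_smul_add_of_bijective_smul_sub
    (hF : Function.Bijective fun x => l • x - A x) :
    Function.Bijective fun x => conj l • x + A x := by
  obtain ⟨ν, hν, hνl⟩ := exists_mul_conj_eq_one_and_sq_mul_eq_neg_conj l
  have hU : Function.Bijective fun x : E => ν • x :=
    MulAction.bijective (Units.mk0 ν (left_ne_zero_of_mul_eq_one hν))
  have hG : (fun x => conj l • x + A x) =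
      Neg.neg ∘ (ν • ·) ∘ (fun x => l • x - A x) ∘ (ν • ·) :=
    funext (conj_smul_add_eq_neg_smul_smul_sub A l hν hνl)
  rw [hG]
  exact neg_involutive.bijective.comp (hU.comp (hF.comp hU))

theorem bijective_smul_sub_iff_bijective_normSq_smul_sub :
    (Function.Bijective fun x => l • x - A x) ↔
      Function.Bijective fun x => (normSq l : ℂ) • x - A (A x) := by
  have hFG : (fun x => (normSq l : ℂ) • x - A (A x)) =
      (fun x => l • x - A x) ∘ (fun x => conj l • x + A x) :=
    funext fun x => (smul_sub_apply_conj_smul_add A l x).symm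
  have hGF : (fun x => (normSq l : ℂ) • x - A (A x)) =
      (fun x => conj l • x + A x) ∘ (fun x => l • x - A x) :=
    funext fun x => (conj_smul_add_apply_smul_sub A l x).symm
  exact ⟨fun hF => hFG ▸ hF.comp (bijective_conj_smul_add_of_bijective_smul_sub A l hF),
    fun h => ⟨(hGF ▸ h).injective.of_comp, (hFG ▸ h).surjective.of_comp⟩⟩

end LinearMap

/-- For a bounded antilinear operator `A`, `λ ∈ σ(A)` (real-linear spectrum)
iff `|λ|² ∈ σ(A²)` (complex-linear spectrum), where `A²` is complex linear. -/
theorem stmt3 {H : Type*} [NormedAddCommGroup H] [InnerProductSpace ℂ H] [CompleteSpace H]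
    (A : H →L[ℝ] H)
    (hA : ∀ (c : ℂ) (x : H), A (c • x) = (starRingEnd ℂ c) • A x)
    (B : H →L[ℂ] H) (hB : ∀ x, B x = A (A x)) (l : ℂ) :
    ¬ IsUnit (l • (ContinuousLinearMap.id ℝ H) - A) ↔
      (((‖l‖ : ℝ) : ℂ) ^ 2) ∈ spectrum ℂ B := by
  let A' : H →ₗ⋆[ℂ] H := { toFun := A, map_add' := map_add A, map_smul' := hA }
  have hnorm : ((‖l‖ : ℝ) : ℂ) ^ 2 = (normSq l : ℂ) := by
    rw [normSq_eq_norm_sq]; push_cast; rfl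
  rw [spectrum.mem_iff, ContinuousLinearMap.isUnit_iff_bijective,
    ContinuousLinearMap.isUnit_iff_bijective, not_iff_not, hnorm]
  convert A'.bijective_smul_sub_iff_bijective_normSq_smul_sub l using 2 <;> ext x
  · simp [A']
  · simp [A', hB, Algebra.algebraMap_eq_smul_one]
end

section
/- Let A be a bounded antilinear operator on a complex Hilbert space and let f̂(λ) = u₁(|λ|²) + v₁(|λ|²)λ and ĝ(λ) = u₂(|λ|²) + v₂(|λ|²)λ with u₁, v₁, u₂, v₂ complex polynomials. If A x = λ x for x ∈ H, then f(A) g(A) x = ĥ(λ) x, where ĥ(λ) = u₁(|λ|²)u₂(|λ|²) + |λ|² v₁(|λ|²) conj(v₂(|λ|²)) + ( u₁(|λ|²) v₂(|λ|²) + conj(u₂(|λ|²)) v₁(|λ|²) ) λ. -/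
open Complex Polynomial

/-!
On the line `ℂ x` the antilinear `A` acts by `c • x ↦ (conj c * λ) • x`, so `A²` acts on `x` by
`conj λ * λ = |λ|²` and every polynomial `p(A²)` by `p(|λ|²)`. Both sides are therefore scalar
multiples of `x`, and the formula for `ĥ` is the resulting identity of scalars.
-/

theorem ContinuousLinearMap.aeval_apply_of_apply_eq_smul {R M : Type*} [CommRing R]
    [TopologicalSpace M] [AddCommGroup M] [Module R M] [ContinuousConstSMul R M]
    [IsTopologicalAddGroup M] {f : M →L[R] M} {μ : R} {x : M} (hx : f x = μ • x) (p : R[X]) :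
    aeval f p x = p.eval μ • x := by
  let toEnd : (M →L[R] M) →ₐ[R] Module.End R M :=
    { ContinuousLinearMap.toLinearMapRingHom with commutes' := fun _ ↦ rfl }
  change toEnd (aeval f p) x = _
  rw [← aeval_algHom_apply]
  exact Module.End.aeval_apply_of_mem_apply_eq_smul hx

theorem apply_apply_of_antilinear_of_apply_eq_smul {E : Type*} [AddCommGroup E] [Module ℂ E]
    (A : E →+ E) (hA : ∀ (c : ℂ) (x : E), A (c • x) = (starRingEnd ℂ c) • A x)
    {x : E} {l : ℂ} (hx : A x = l • x) : A (A x) = ((‖l‖ : ℂ) ^ 2) • x := by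
  rw [hx, hA, hx, smul_smul, ← mul_conj', mul_comm]

theorem stmt5_general {H : Type*} [NormedAddCommGroup H] [InnerProductSpace ℂ H]
    (A : H →L[ℝ] H)
    (hA : ∀ (c : ℂ) (x : H), A (c • x) = (starRingEnd ℂ c) • A x)
    (B : H →L[ℂ] H) (hB : ∀ x, B x = A (A x))
    (u₁ v₁ u₂ v₂ : Polynomial ℂ) (x : H) (l : ℂ) (hx : A x = l • x) :
    (Polynomial.aeval B u₁) ((Polynomial.aeval B u₂) x + (Polynomial.aeval B v₂) (A x)) +
      (Polynomial.aeval B v₁)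
        (A ((Polynomial.aeval B u₂) x + (Polynomial.aeval B v₂) (A x))) =
      (u₁.eval (((‖l‖ : ℝ) : ℂ) ^ 2) * u₂.eval (((‖l‖ : ℝ) : ℂ) ^ 2) +
        ((‖l‖ : ℝ) : ℂ) ^ 2 * v₁.eval (((‖l‖ : ℝ) : ℂ) ^ 2) *
          (starRingEnd ℂ) (v₂.eval (((‖l‖ : ℝ) : ℂ) ^ 2)) +
        (u₁.eval (((‖l‖ : ℝ) : ℂ) ^ 2) * v₂.eval (((‖l‖ : ℝ) : ℂ) ^ 2) +
          (starRingEnd ℂ) (u₂.eval (((‖l‖ : ℝ) : ℂ) ^ 2)) *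
            v₁.eval (((‖l‖ : ℝ) : ℂ) ^ 2)) * l) • x := by
  set μ : ℂ := ((‖l‖ : ℝ) : ℂ) ^ 2
  have hBx : B x = μ • x := by
    rw [hB]
    exact apply_apply_of_antilinear_of_apply_eq_smul A.toAddMonoidHom hA hx
  have haeval (p : ℂ[X]) : aeval B p x = p.eval μ • x :=
    ContinuousLinearMap.aeval_apply_of_apply_eq_smul hBx p
  have hg : aeval B u₂ x + aeval B v₂ (A x) = (u₂.eval μ + v₂.eval μ * l) • x := by
    rw [hx, map_smul, haeval, haeval, smul_smul, ← add_smul, mul_comm]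
  have hl : (starRingEnd ℂ) l * l = μ := by rw [mul_comm, mul_conj']
  rw [hg, hA, hx, smul_smul, map_smul, map_smul, haeval, haeval, smul_smul, smul_smul,
    ← add_smul]
  congr 1
  simp only [map_add, map_mul]
  linear_combination (v₁.eval μ * (starRingEnd ℂ) (v₂.eval μ)) * hl

/-- The product formula in `C(r2)`: for an eigenvector `A x = λ x`,
`f(A) g(A) x = ĥ(λ) x` where `ĥ = f̂ * ĝ`. -/
theorem stmt5 {H : Type*} [NormedAddCommGroup H] [InnerProductSpace ℂ H] [CompleteSpace H]
    (A : H →L[ℝ] H)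
    (hA : ∀ (c : ℂ) (x : H), A (c • x) = (starRingEnd ℂ c) • A x)
    (B : H →L[ℂ] H) (hB : ∀ x, B x = A (A x))
    (u₁ v₁ u₂ v₂ : Polynomial ℂ) (x : H) (l : ℂ) (hx : A x = l • x) :
    (Polynomial.aeval B u₁) ((Polynomial.aeval B u₂) x + (Polynomial.aeval B v₂) (A x)) +
      (Polynomial.aeval B v₁)
        (A ((Polynomial.aeval B u₂) x + (Polynomial.aeval B v₂) (A x))) =
      (u₁.eval (((‖l‖ : ℝ) : ℂ) ^ 2) * u₂.eval (((‖l‖ : ℝ) : ℂ) ^ 2) +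
        ((‖l‖ : ℝ) : ℂ) ^ 2 * v₁.eval (((‖l‖ : ℝ) : ℂ) ^ 2) *
          (starRingEnd ℂ) (v₂.eval (((‖l‖ : ℝ) : ℂ) ^ 2)) +
        (u₁.eval (((‖l‖ : ℝ) : ℂ) ^ 2) * v₂.eval (((‖l‖ : ℝ) : ℂ) ^ 2) +
          (starRingEnd ℂ) (u₂.eval (((‖l‖ : ℝ) : ℂ) ^ 2)) *
            v₁.eval (((‖l‖ : ℝ) : ℂ) ^ 2)) * l) • x :=
  stmt5_general A hA B hB u₁ v₁ u₂ v₂ x l hx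
end

section
/- Let A be a bounded antilinear self-adjoint operator on a complex Hilbert space H (self-adjoint with respect to the real inner product Re⟨·,·⟩). Then for every polynomial p we have p̂(σ(A)) ⊆ σ(p(A)), where p̂(λ) = Σ_k (α_{2k} + α_{2k+1}λ)|λ|^{2k} for p(z) = Σ_j α_j z^j. -/
open Complex ComplexConjugate

/-!
Even powers of the antilinear operator `A` are complex-linear, and
`(conj λ + A)(λ - A) = |λ|² - A²`. Hence `|λ|^{2k} - A^{2k}` and `λ|λ|^{2k} - A^{2k+1}` lie in the
left ideal generated by `λ - A`, and so does `p̂(λ) - p(A)`: it equals `T (λ - A)` for some `T`.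
If it were invertible, `λ - A` would have a left inverse, so it would be injective and bounded
below, with closed range. A vector `y` orthogonal to that range for `Re ⟪·, ·⟫` satisfies
`A y = conj λ • y` by self-adjointness, so `λ - A` annihilates `conj λ • y` (or `y` itself when
`λ = 0`), whence `y = 0`. Thus `λ - A` would be invertible.
-/

theorem ContinuousLinearMap.isUnit_of_mul_eq_one_of_forall_inner_eq_zero {𝕜 E : Type*} [RCLike 𝕜]
    [NormedAddCommGroup E] [InnerProductSpace 𝕜 E] [CompleteSpace E] {s e : E →L[𝕜] E}
    (hse : s * e = 1) (h : ∀ y, (∀ x, inner 𝕜 (e x) y = 0) → y = 0) : IsUnit e := by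
  rw [isUnit_iff_bijective, bijective_iff_dense_range_and_antilipschitz,
    Submodule.topologicalClosure_eq_top_iff, Submodule.eq_bot_iff]
  refine ⟨fun y hy => h y fun x => hy _ ⟨x, rfl⟩, ‖s‖₊, e.antilipschitz_of_bound fun x => ?_⟩
  calc ‖x‖ = ‖s (e x)‖ := by rw [← mul_apply_eq_comp, hse, one_apply_eq_self]
    _ ≤ ‖s‖ * ‖e x‖ := s.le_opNorm _

theorem Finset.sum_range_two_mul {M : Type*} [AddCommMonoid M] (f : ℕ → M) (n : ℕ) :
    ∑ k ∈ range (2 * n), f k = ∑ k ∈ range n, (f (2 * k) + f (2 * k + 1)) := by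
  induction n with
  | zero => simp
  | succ n ih => rw [Nat.mul_succ, sum_range_succ, sum_range_succ, ih, sum_range_succ, add_assoc]

abbrev IsAntilinear {H : Type*} [NormedAddCommGroup H] [NormedSpace ℂ H] (A : H →L[ℝ] H) : Prop :=
  ∀ (c : ℂ) (x : H), A (c • x) = conj c • A x

section Antilinear

variable {H : Type*} [NormedAddCommGroup H] [NormedSpace ℂ H] {A : H →L[ℝ] H}

theorem ContinuousLinearMap.complex_smul_mem_ideal {I : Ideal (H →L[ℝ] H)} {T : H →L[ℝ] H}
    (hT : T ∈ I) (c : ℂ) : c • T ∈ I :=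
  I.mul_mem_left (c • 1) hT

namespace IsAntilinear

theorem pow_two_mul_apply_smul (hA : IsAntilinear A) (k : ℕ) (c : ℂ) (x : H) :
    (A ^ (2 * k)) (c • x) = c • (A ^ (2 * k)) x := by
  induction k generalizing c x with
  | zero => simp
  | succ k ih =>
    rw [Nat.mul_succ, pow_add, sq, mul_apply_eq_comp, mul_apply_eq_comp, hA, hA, ih, conj_conj]
    rfl

theorem pow_two_mul_mul_smul (hA : IsAntilinear A) (k : ℕ) (c : ℂ) (T : H →L[ℝ] H) :
    A ^ (2 * k) * (c • T) = c • (A ^ (2 * k) * T) := by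
  ext x
  exact hA.pow_two_mul_apply_smul k c (T x)

theorem conj_smul_one_add_mul_smul_one_sub (hA : IsAntilinear A) (l : ℂ) :
    (conj l • 1 + A) * (l • 1 - A) = (l * conj l) • 1 - A ^ 2 := by
  ext x
  simp only [mul_apply_eq_comp, add_apply, sub_apply, smul_apply,
    one_apply_eq_self, map_sub, hA l x, sq]
  module

theorem smul_one_sub_pow_two_mul_mem_span (hA : IsAntilinear A) (l : ℂ) (k : ℕ) :
    (l * conj l) ^ k • 1 - A ^ (2 * k) ∈ Ideal.span {l • 1 - A} := by
  induction k with
  | zero => simp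
  | succ k ih =>
    have hsq : (l * conj l) • 1 - A ^ 2 ∈ Ideal.span {l • 1 - A} := by
      rw [← hA.conj_smul_one_add_mul_smul_one_sub]
      exact Ideal.mul_mem_left _ _ (Ideal.subset_span rfl)
    have : (l * conj l) ^ (k + 1) • 1 - A ^ (2 * (k + 1))
        = (l * conj l) • ((l * conj l) ^ k • 1 - A ^ (2 * k))
          + A ^ (2 * k) * ((l * conj l) • 1 - A ^ 2) := by
      rw [mul_sub, hA.pow_two_mul_mul_smul, mul_one, ← pow_add, Nat.mul_succ]
      module
    rw [this]
    exact add_mem (ContinuousLinearMap.complex_smul_mem_ideal ih _) (Ideal.mul_mem_left _ _ hsq)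

theorem smul_one_sub_pow_two_mul_add_one_mem_span (hA : IsAntilinear A) (l : ℂ) (k : ℕ) :
    (l * (l * conj l) ^ k) • 1 - A ^ (2 * k + 1) ∈ Ideal.span {l • 1 - A} := by
  have : (l * (l * conj l) ^ k) • 1 - A ^ (2 * k + 1)
      = l • ((l * conj l) ^ k • 1 - A ^ (2 * k)) + A ^ (2 * k) * (l • 1 - A) := by
    rw [mul_sub, hA.pow_two_mul_mul_smul, mul_one, pow_succ]
    module
  rw [this]
  exact add_mem
    (ContinuousLinearMap.complex_smul_mem_ideal (hA.smul_one_sub_pow_two_mul_mem_span l k) _)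
    (Ideal.mul_mem_left _ _ (Ideal.subset_span rfl))

theorem sum_smul_one_sub_sum_smul_pow_mem_span (hA : IsAntilinear A) (α : ℕ → ℂ) (l : ℂ)
    (n : ℕ) :
    (∑ k ∈ Finset.range n, (α (2 * k) + α (2 * k + 1) * l) * (l * conj l) ^ k) • 1
      - ∑ k ∈ Finset.range (2 * n), α k • A ^ k ∈ Ideal.span {l • 1 - A} := by
  rw [Finset.sum_range_two_mul, Finset.sum_smul, ← Finset.sum_sub_distrib]
  refine Ideal.sum_mem _ fun k _ => ?_
  have : ((α (2 * k) + α (2 * k + 1) * l) * (l * conj l) ^ k) • (1 : H →L[ℝ] H)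
      - (α (2 * k) • A ^ (2 * k) + α (2 * k + 1) • A ^ (2 * k + 1))
      = α (2 * k) • ((l * conj l) ^ k • 1 - A ^ (2 * k))
        + α (2 * k + 1) • ((l * (l * conj l) ^ k) • 1 - A ^ (2 * k + 1)) := by
    module
  rw [this]
  exact add_mem
    (ContinuousLinearMap.complex_smul_mem_ideal (hA.smul_one_sub_pow_two_mul_mem_span l k) _)
    (ContinuousLinearMap.complex_smul_mem_ideal
      (hA.smul_one_sub_pow_two_mul_add_one_mem_span l k) _)

end IsAntilinear

end Antilinear

section Hilbert

variable {H : Type*} [NormedAddCommGroup H] [InnerProductSpace ℂ H] {A : H →L[ℝ] H}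

theorem apply_eq_conj_smul_of_forall_re_inner_eq_zero
    (hsa : ∀ x y : H, (inner ℂ (A x) y).re = (inner ℂ x (A y)).re) {l : ℂ} {y : H}
    (hy : ∀ x, (inner ℂ ((l • 1 - A) x) y).re = 0) : A y = conj l • y := by
  have hadj : ∀ x, (inner ℂ x (conj l • y - A y)).re = 0 := fun x => by
    have := hy x
    rwa [sub_apply, smul_apply, one_apply_eq_self, inner_sub_left, inner_smul_left, sub_re,
      hsa, ← inner_smul_right, ← sub_re, ← inner_sub_right] at this
  exact (sub_eq_zero.1 (re_inner_self_nonpos (𝕜 := ℂ) |>.1 (hadj _).le)).symm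

theorem IsAntilinear.isUnit_smul_one_sub_of_mul_eq_one [CompleteSpace H] (hA : IsAntilinear A)
    (hsa : ∀ x y : H, (inner ℂ (A x) y).re = (inner ℂ x (A y)).re) {l : ℂ} {s : H →L[ℝ] H}
    (hs : s * (l • 1 - A) = 1) : IsUnit (l • 1 - A) := by
  let _ := InnerProductSpace.rclikeToReal ℂ H
  have hinj : Function.Injective (l • 1 - A : H →L[ℝ] H) :=
    Function.LeftInverse.injective (g := s) fun x => DFunLike.congr_fun hs x
  refine ContinuousLinearMap.isUnit_of_mul_eq_one_of_forall_inner_eq_zero hs fun y hy => ?_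
  have hAy := apply_eq_conj_smul_of_forall_re_inner_eq_zero hsa hy
  rcases eq_or_ne l 0 with rfl | hl
  · exact hinj (by simp [hAy])
  · have : (l • 1 - A) (conj l • y) = (l • 1 - A) 0 := by
      simp [hA _ _, hAy, smul_smul]
    simpa [hl] using hinj this

end Hilbert

/-- Spectral mapping inclusion `p̂(σ(A)) ⊆ σ(p(A))` for a bounded
self-adjoint antilinear operator `A` and a polynomial `p`. -/
theorem stmt6 {H : Type*} [NormedAddCommGroup H] [InnerProductSpace ℂ H] [CompleteSpace H]
    (A : H →L[ℝ] H)
    (hA : ∀ (c : ℂ) (x : H), A (c • x) = (starRingEnd ℂ c) • A x)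
    (hsa : ∀ x y : H, (inner ℂ (A x) y : ℂ).re = (inner ℂ x (A y) : ℂ).re)
    (j : ℕ) (α : ℕ → ℂ) (hα : ∀ k, j < k → α k = 0) (l : ℂ)
    (hl : ¬ IsUnit (l • (ContinuousLinearMap.id ℝ H) - A)) :
    ¬ IsUnit ((∑ k ∈ Finset.range (j / 2 + 1),
        (α (2 * k) + α (2 * k + 1) * l) * ((‖l‖ : ℝ) : ℂ) ^ (2 * k)) •
          (ContinuousLinearMap.id ℝ H) -
        ∑ k ∈ Finset.range (j + 1), α k • A ^ k) := by
  rw [← ContinuousLinearMap.one_def] at hl ⊢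
  have hdeg : ∑ k ∈ Finset.range (j + 1), α k • A ^ k
      = ∑ k ∈ Finset.range (2 * (j / 2 + 1)), α k • A ^ k :=
    Finset.sum_subset (Finset.range_subset_range.2 (by omega)) fun k _ hk => by
      rw [hα k (by simpa using hk), zero_smul]
  simp_rw [hdeg, pow_mul, ← mul_conj']
  rintro ⟨u, hu⟩
  obtain ⟨T, hT⟩ := Ideal.mem_span_singleton'.1
    (IsAntilinear.sum_smul_one_sub_sum_smul_pow_mem_span hA α l (j / 2 + 1))
  exact hl (IsAntilinear.isUnit_smul_one_sub_of_mul_eq_one hA hsa (s := ↑u⁻¹ * T)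
    (by rw [mul_assoc, hT, ← hu, Units.inv_mul]))
end

section
/- Let A be a bounded antilinear self-adjoint operator on a complex Hilbert space H, and let x, y ∈ H. If y is orthogonal to K(A;x) := closure of span{p(A)x : p polynomial} (with respect to the complex inner product), then K(A;y) is orthogonal to K(A;x). -/
open Complex

open scoped InnerProductSpace

section AntilinearSelfAdjoint

variable {H : Type*} [NormedAddCommGroup H] [InnerProductSpace ℂ H]

/-- The set `{p(A) x : p polynomial}`, whose closure is `K(A;x)`. -/
def krylovSet (A : H →L[ℝ] H) (x : H) : Set H :=
  {w : H | ∃ (n : ℕ) (α : ℕ → ℂ), w = ∑ k ∈ Finset.range n, α k • (A ^ k) x}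

/-- Real-part symmetry upgrades to `⟪A z, v⟫ = conj ⟪z, A v⟫`: the imaginary part is the
real part of the identity tested against `I • v`. -/
theorem inner_apply_eq_conj_inner_apply {A : H →L[ℝ] H}
    (hA : ∀ (c : ℂ) (x : H), A (c • x) = (starRingEnd ℂ c) • A x)
    (hsa : ∀ x y : H, (⟪A x, y⟫_ℂ).re = (⟪x, A y⟫_ℂ).re) (z v : H) :
    ⟪A z, v⟫_ℂ = starRingEnd ℂ ⟪z, A v⟫_ℂ := by
  apply Complex.ext
  · simpa only [Complex.conj_re] using hsa z v
  · have h := hsa z (Complex.I • v)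
    rw [hA, inner_smul_right, inner_smul_right] at h
    simp only [Complex.mul_re, Complex.I_re, Complex.I_im, Complex.conj_I,
      Complex.neg_re, Complex.neg_im, Complex.conj_im] at h ⊢
    linarith

theorem mapsTo_krylovSet {A : H →L[ℝ] H}
    (hA : ∀ (c : ℂ) (x : H), A (c • x) = (starRingEnd ℂ c) • A x) (x : H) :
    Set.MapsTo A (krylovSet A x) (krylovSet A x) := by
  rintro _ ⟨n, α, rfl⟩
  refine ⟨n + 1, fun k => if k = 0 then 0 else starRingEnd ℂ (α (k - 1)), ?_⟩
  rw [map_sum, Finset.sum_range_succ']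
  simp only [Nat.succ_ne_zero, if_false, Nat.add_sub_cancel, reduceIte, zero_smul, add_zero]
  refine Finset.sum_congr rfl fun k _ => ?_
  rw [hA, pow_succ']
  rfl

/-- The orthogonal complement of an `A`-invariant set is `A`-invariant. -/
theorem inner_pow_apply_eq_zero_of_mapsTo {A : H →L[ℝ] H}
    (hadj : ∀ z v : H, ⟪A z, v⟫_ℂ = starRingEnd ℂ ⟪z, A v⟫_ℂ)
    {S : Set H} (hS : Set.MapsTo A S S) {y : H} (hy : ∀ w ∈ S, ⟪y, w⟫_ℂ = 0) :
    ∀ (k : ℕ), ∀ w ∈ S, ⟪(A ^ k) y, w⟫_ℂ = 0 := by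
  intro k
  induction k with
  | zero => simpa using hy
  | succ k ih =>
    intro w hw
    rw [pow_succ', mul_apply_eq_comp, hadj, ih (A w) (hS hw), map_zero]

theorem inner_eq_zero_of_mem_closure_krylovSet {A : H →L[ℝ] H} {y w : H}
    (hw : ∀ k : ℕ, ⟪(A ^ k) y, w⟫_ℂ = 0) :
    ∀ u ∈ closure (krylovSet A y), ⟪u, w⟫_ℂ = 0 := by
  have hclosed : IsClosed {u : H | ⟪u, w⟫_ℂ = 0} :=
    isClosed_eq (continuous_id.inner continuous_const) continuous_const
  refine fun u hu => closure_minimal ?_ hclosed hu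
  rintro _ ⟨n, α, rfl⟩
  simp only [Set.mem_ofPred_eq, sum_inner, inner_smul_left, hw, mul_zero, Finset.sum_const_zero]

end AntilinearSelfAdjoint

theorem stmt7_general {H : Type*} [NormedAddCommGroup H] [InnerProductSpace ℂ H]
    (A : H →L[ℝ] H)
    (hA : ∀ (c : ℂ) (x : H), A (c • x) = (starRingEnd ℂ c) • A x)
    (hsa : ∀ x y : H, (inner ℂ (A x) y : ℂ).re = (inner ℂ x (A y) : ℂ).re)
    (x y : H)
    (hy : ∀ w ∈ closure {w : H | ∃ (n : ℕ) (α : ℕ → ℂ),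
        w = ∑ k ∈ Finset.range n, α k • (A ^ k) x}, (inner ℂ y w : ℂ) = 0) :
    ∀ u ∈ closure {w : H | ∃ (n : ℕ) (α : ℕ → ℂ),
        w = ∑ k ∈ Finset.range n, α k • (A ^ k) y},
      ∀ w ∈ closure {w : H | ∃ (n : ℕ) (α : ℕ → ℂ),
        w = ∑ k ∈ Finset.range n, α k • (A ^ k) x}, (inner ℂ u w : ℂ) = 0 := by
  intro u hu w hw
  have hinvariant : Set.MapsTo A (closure (krylovSet A x)) (closure (krylovSet A x)) :=
    (mapsTo_krylovSet hA x).closure A.continuous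
  have horth := inner_pow_apply_eq_zero_of_mapsTo
    (inner_apply_eq_conj_inner_apply hA hsa) hinvariant hy
  exact inner_eq_zero_of_mem_closure_krylovSet (fun k => horth k w hw) u hu

/-- If `y ⟂ K(A;x)` then `K(A;y) ⟂ K(A;x)` for a bounded self-adjoint
antilinear operator `A`, where `K(A;z)` is the closure of `{p(A)z : p polynomial}`. -/
theorem stmt7 {H : Type*} [NormedAddCommGroup H] [InnerProductSpace ℂ H] [CompleteSpace H]
    (A : H →L[ℝ] H)
    (hA : ∀ (c : ℂ) (x : H), A (c • x) = (starRingEnd ℂ c) • A x)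
    (hsa : ∀ x y : H, (inner ℂ (A x) y : ℂ).re = (inner ℂ x (A y) : ℂ).re)
    (x y : H)
    (hy : ∀ w ∈ closure {w : H | ∃ (n : ℕ) (α : ℕ → ℂ),
        w = ∑ k ∈ Finset.range n, α k • (A ^ k) x}, (inner ℂ y w : ℂ) = 0) :
    ∀ u ∈ closure {w : H | ∃ (n : ℕ) (α : ℕ → ℂ),
        w = ∑ k ∈ Finset.range n, α k • (A ^ k) y},
      ∀ w ∈ closure {w : H | ∃ (n : ℕ) (α : ℕ → ℂ),
        w = ∑ k ∈ Finset.range n, α k • (A ^ k) x}, (inner ℂ u w : ℂ) = 0 :=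
  stmt7_general A hA hsa x y hy
end

section
/- Let p ∈ P_d(r2) be nonzero, writing p(λ) = u(|λ|²) + v(|λ|²)λ with polynomials u, v. Let m be the number of radii r > 0 such that all points of modulus r are zeroes of p, and let s be the number of radii r ≥ 0 for which exactly one point of modulus r is a zero of p. Then 2m + s ≤ d. -/
open Complex ComplexConjugate Polynomial

/-!
Write `p λ = u(|λ|²) + v(|λ|²) λ`. If `p λ = 0` then `|u t|² = t |v t|²` at `t = |λ|²`, so `t` is a
root of `F = u ū - X v v̄`, a polynomial of degree at most `d`; it is nonzero since at `t < 0` it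
equals `|u t|² + |t| |v t|²`. If a whole circle of radius `r > 0` consists of zeros, testing
`λ = ± r` gives `u(r²) = v(r²) = 0`, so `r²` is a double root of `F`; such a circle carries two
zeros, so it is not counted in `s`. Counting the roots of `F` with multiplicity gives
`2m + s ≤ deg F ≤ d`.
-/

namespace Polynomial

theorem natDegree_sum_range_C_mul_X_pow_le {R : Type*} [Semiring R] (a : ℕ → R)
    (n : ℕ) : (∑ k ∈ Finset.range n, C (a k) * X ^ k).natDegree ≤ n - 1 :=
  natDegree_sum_le_of_forall_le _ _ fun k hk =>
    (natDegree_C_mul_X_pow_le _ _).trans (by rw [Finset.mem_range] at hk; omega)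

theorem eq_zero_or_two_mul_natDegree_sum_range_lt {R : Type*} [Semiring R] {d : ℕ} (b : ℕ → R)
    (hb : d % 2 = 0 → b (d / 2) = 0) :
    ∑ k ∈ Finset.range (d / 2 + 1), C (b k) * X ^ k = 0 ∨
      2 * (∑ k ∈ Finset.range (d / 2 + 1), C (b k) * X ^ k).natDegree < d := by
  rcases Nat.mod_two_eq_zero_or_one d with he | ho
  · rw [Finset.sum_range_succ, hb he, C_0, zero_mul, add_zero]
    rcases Nat.eq_zero_or_pos d with rfl | hd0
    · simp
    · have := natDegree_sum_range_C_mul_X_pow_le b (d / 2)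
      omega
  · have := natDegree_sum_range_C_mul_X_pow_le b (d / 2 + 1)
    omega

theorem two_mul_ncard_add_ncard_le_natDegree {R : Type*} [CommRing R] [IsDomain R] {F : R[X]}
    (hF : F ≠ 0) {M S : Set R} (hMS : Disjoint M S) (hM : ∀ a ∈ M, (X - C a) ^ 2 ∣ F)
    (hS : ∀ a ∈ S, F.IsRoot a) :
    2 * M.ncard + S.ncard ≤ F.natDegree := by
  classical
  have hMroot : ∀ a ∈ M, F.IsRoot a := fun a ha =>
    dvd_iff_isRoot.1 ((dvd_pow_self _ two_ne_zero).trans (hM a ha))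
  lift M to Finset R using (finite_setOfPred_isRoot hF).subset hMroot
  lift S to Finset R using (finite_setOfPred_isRoot hF).subset hS
  have hle : 2 • M.val + S.val ≤ F.roots := by
    refine Multiset.le_iff_count.2 fun a => ?_
    rw [Multiset.count_add, Multiset.count_nsmul, count_roots,
      Multiset.count_eq_of_nodup M.nodup, Multiset.count_eq_of_nodup S.nodup]
    split_ifs with haM haS haS
    · exact absurd haS (Set.disjoint_left.1 hMS haM)
    · simpa using (le_rootMultiplicity_iff hF).2 (hM a haM)
    · exact (rootMultiplicity_pos hF).2 (hS a haS)
    · simp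
  simpa using (Multiset.card_le_card hle).trans F.card_roots'

end Polynomial

theorem eval_map_conj_ofReal (P : ℂ[X]) (t : ℝ) :
    (P.map (starRingEnd ℂ)).eval (t : ℂ) = conj (P.eval (t : ℂ)) := by
  rw [eval_map, ← conj_ofReal t, eval₂_at_apply, conj_ofReal]

noncomputable def normPoly (U V : ℂ[X]) : ℂ[X] :=
  U * U.map (starRingEnd ℂ) - X * (V * V.map (starRingEnd ℂ))

section normPoly

variable (U V : ℂ[X])

theorem eval_normPoly_ofReal (t : ℝ) :
    (normPoly U V).eval (t : ℂ) =
      ((normSq (U.eval (t : ℂ)) - t * normSq (V.eval (t : ℂ)) : ℝ) : ℂ) := by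
  simp only [normPoly, eval_sub, eval_mul, eval_X, eval_map_conj_ofReal, mul_conj]
  push_cast
  ring

theorem normPoly_isRoot_of_eval_add_mul_eq_zero {l : ℂ}
    (h : U.eval ((‖l‖ ^ 2 : ℝ) : ℂ) + V.eval ((‖l‖ ^ 2 : ℝ) : ℂ) * l = 0) :
    (normPoly U V).IsRoot ((‖l‖ ^ 2 : ℝ) : ℂ) := by
  rw [IsRoot, eval_normPoly_ofReal, eq_neg_of_add_eq_zero_left h, normSq_neg, normSq_mul,
    normSq_eq_norm_sq l]
  simp only [mul_comm, sub_self, ofReal_zero]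

theorem normPoly_ne_zero (h : U ≠ 0 ∨ V ≠ 0) : normPoly U V ≠ 0 := by
  contrapose! h
  have hroots : ∀ t : ℝ, t < 0 → U.IsRoot t ∧ V.IsRoot t := by
    intro t ht
    have h0 := eval_normPoly_ofReal U V t
    rw [h, eval_zero, eq_comm, ofReal_eq_zero] at h0
    have hU := normSq_nonneg (U.eval (t : ℂ))
    have hV := normSq_nonneg (V.eval (t : ℂ))
    exact ⟨normSq_eq_zero.1 (by nlinarith), normSq_eq_zero.1 (by nlinarith)⟩
  have hinf : ((↑) '' Set.Iio (0 : ℝ) : Set ℂ).Infinite :=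
    (Set.Iio_infinite 0).image ofReal_injective.injOn
  refine ⟨eq_zero_of_infinite_isRoot _ (hinf.mono ?_), eq_zero_of_infinite_isRoot _ (hinf.mono ?_)⟩
  · rintro _ ⟨t, ht, rfl⟩; exact (hroots t ht).1
  · rintro _ ⟨t, ht, rfl⟩; exact (hroots t ht).2

theorem sq_dvd_normPoly {t : ℝ} (hU : U.IsRoot t) (hV : V.IsRoot t) :
    (X - C (t : ℂ)) ^ 2 ∣ normPoly U V := by
  have hconj : ∀ P : ℂ[X], P.IsRoot t → X - C (t : ℂ) ∣ P.map (starRingEnd ℂ) := fun P hP =>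
    dvd_iff_isRoot.2 (by simpa using hP.map (f := starRingEnd ℂ))
  rw [sq]
  exact dvd_sub (mul_dvd_mul (dvd_iff_isRoot.2 hU) (hconj U hU))
    (dvd_mul_of_dvd_right (mul_dvd_mul (dvd_iff_isRoot.2 hV) (hconj V hV)) X)

theorem natDegree_normPoly_le {d : ℕ} (hU : 2 * U.natDegree ≤ d)
    (hV : V = 0 ∨ 2 * V.natDegree < d) :
    (normPoly U V).natDegree ≤ d := by
  refine (natDegree_sub_le _ _).trans (max_le ?_ ?_)
  · calc (U * U.map (starRingEnd ℂ)).natDegree ≤ U.natDegree + (U.map (starRingEnd ℂ)).natDegree :=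
          natDegree_mul_le
      _ ≤ d := by rw [natDegree_map]; omega
  · rcases hV with rfl | hV
    · simp
    calc (X * (V * V.map (starRingEnd ℂ))).natDegree
        ≤ X.natDegree + (V.natDegree + (V.map (starRingEnd ℂ)).natDegree) :=
          natDegree_mul_le.trans (Nat.add_le_add_left natDegree_mul_le _)
      _ ≤ d := by rw [natDegree_map, natDegree_X]; omega

end normPoly

def circleZeroRadii (p : ℂ → ℂ) : Set ℝ := {r | 0 < r ∧ ∀ l : ℂ, ‖l‖ = r → p l = 0}

def singleZeroRadii (p : ℂ → ℂ) : Set ℝ := {r | 0 ≤ r ∧ ∃! l : ℂ, ‖l‖ = r ∧ p l = 0}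

section Radii

variable {p : ℂ → ℂ} {U V : ℂ[X]} {r : ℝ}

theorem isRoot_of_mem_circleZeroRadii
    (hp : ∀ z, p z = U.eval ((‖z‖ ^ 2 : ℝ) : ℂ) + V.eval ((‖z‖ ^ 2 : ℝ) : ℂ) * z)
    (hr : r ∈ circleZeroRadii p) : U.IsRoot ((r ^ 2 : ℝ) : ℂ) ∧ V.IsRoot ((r ^ 2 : ℝ) : ℂ) := by
  have hnorm : ‖(r : ℂ)‖ = r := Complex.norm_of_nonneg hr.1.le
  have hpos := hr.2 r hnorm
  have hneg := hr.2 (-r) (by rw [norm_neg, hnorm])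
  rw [hp, hnorm] at hpos
  rw [hp, norm_neg, hnorm] at hneg
  have hV : V.eval ((r ^ 2 : ℝ) : ℂ) * (2 * r) = 0 := by linear_combination hpos - hneg
  have hr0 : (2 * r : ℂ) ≠ 0 := by exact_mod_cast (mul_pos two_pos hr.1).ne'
  have hV' : V.IsRoot ((r ^ 2 : ℝ) : ℂ) := (mul_eq_zero.1 hV).resolve_right hr0
  refine ⟨?_, hV'⟩
  rwa [hV'.eq_zero, zero_mul, add_zero] at hpos

theorem disjoint_circleZeroRadii_singleZeroRadii :
    Disjoint (circleZeroRadii p) (singleZeroRadii p) := by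
  refine Set.disjoint_left.2 fun r hM hS => ?_
  have hnorm : ‖(r : ℂ)‖ = r := Complex.norm_of_nonneg hM.1.le
  have hpos : ‖(r : ℂ)‖ = r ∧ p r = 0 := ⟨hnorm, hM.2 r hnorm⟩
  have hneg : ‖-(r : ℂ)‖ = r ∧ p (-r) = 0 := by
    rw [norm_neg]; exact ⟨hnorm, hM.2 (-r) (by rw [norm_neg, hnorm])⟩
  have h : (-r : ℂ) = r := hS.2.unique hneg hpos
  exact hM.1.ne' (by exact_mod_cast CharZero.neg_eq_self_iff.1 h)

theorem normPoly_isRoot_of_mem_singleZeroRadii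
    (hp : ∀ z, p z = U.eval ((‖z‖ ^ 2 : ℝ) : ℂ) + V.eval ((‖z‖ ^ 2 : ℝ) : ℂ) * z)
    (hr : r ∈ singleZeroRadii p) : (normPoly U V).IsRoot ((r ^ 2 : ℝ) : ℂ) := by
  obtain ⟨l, ⟨rfl, hl⟩, -⟩ := hr.2
  exact normPoly_isRoot_of_eval_add_mul_eq_zero U V (hp l ▸ hl)

theorem finite_radii_and_two_mul_ncard_add_ncard_le
    (hp : ∀ z, p z = U.eval ((‖z‖ ^ 2 : ℝ) : ℂ) + V.eval ((‖z‖ ^ 2 : ℝ) : ℂ) * z)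
    (hUV : U ≠ 0 ∨ V ≠ 0) :
    (circleZeroRadii p).Finite ∧ (singleZeroRadii p).Finite ∧
      2 * (circleZeroRadii p).ncard + (singleZeroRadii p).ncard ≤ (normPoly U V).natDegree := by
  set f : ℝ → ℂ := fun r => ((r ^ 2 : ℝ) : ℂ)
  have hf : (Set.Ici 0).InjOn f := fun a ha b hb h => (sq_eq_sq₀ ha hb).1 (ofReal_injective h)
  have hM : circleZeroRadii p ⊆ Set.Ici 0 := fun r hr => hr.1.le
  have hS : singleZeroRadii p ⊆ Set.Ici 0 := fun r hr => hr.1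
  have hF := normPoly_ne_zero U V hUV
  have hMdvd : ∀ a ∈ f '' circleZeroRadii p, (X - C a) ^ 2 ∣ normPoly U V := by
    rintro _ ⟨r, hr, rfl⟩
    exact sq_dvd_normPoly U V (isRoot_of_mem_circleZeroRadii hp hr).1
      (isRoot_of_mem_circleZeroRadii hp hr).2
  have hSroot : ∀ a ∈ f '' singleZeroRadii p, (normPoly U V).IsRoot a := by
    rintro _ ⟨r, hr, rfl⟩
    exact normPoly_isRoot_of_mem_singleZeroRadii hp hr
  have hMroot : ∀ a ∈ f '' circleZeroRadii p, (normPoly U V).IsRoot a := fun a ha =>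
    dvd_iff_isRoot.1 ((dvd_pow_self _ two_ne_zero).trans (hMdvd a ha))
  refine ⟨((finite_setOfPred_isRoot hF).subset hMroot).of_finite_image (hf.mono hM),
    ((finite_setOfPred_isRoot hF).subset hSroot).of_finite_image (hf.mono hS), ?_⟩
  rw [← (hf.mono hM).ncard_image, ← (hf.mono hS).ncard_image]
  exact two_mul_ncard_add_ncard_le_natDegree hF
    (disjoint_circleZeroRadii_singleZeroRadii.image hf hM hS) hMdvd hSroot

end Radii

/-- For nonzero `p ∈ P_d(r2)`, if `m` is the number of radii `r > 0` whose
whole circle consists of zeroes of `p`, and `s` the number of radii `r ≥ 0` carrying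
exactly one zero, then `2m + s ≤ d`. -/
theorem stmt10 (d : ℕ) (α : ℕ → ℂ) (p : ℂ → ℂ)
    (hp : p = fun z => ∑ k ∈ Finset.range (d / 2 + 1),
      (α (2 * k) + α (2 * k + 1) * z) * ((‖z‖ : ℝ) : ℂ) ^ (2 * k))
    (hd : d % 2 = 0 → α (d + 1) = 0)
    (hpne : ∃ z, p z ≠ 0) :
    ({r : ℝ | 0 < r ∧ ∀ l : ℂ, ‖l‖ = r → p l = 0}).Finite ∧
    ({r : ℝ | 0 ≤ r ∧ ∃! l : ℂ, ‖l‖ = r ∧ p l = 0}).Finite ∧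
    2 * ({r : ℝ | 0 < r ∧ ∀ l : ℂ, ‖l‖ = r → p l = 0}).ncard +
      ({r : ℝ | 0 ≤ r ∧ ∃! l : ℂ, ‖l‖ = r ∧ p l = 0}).ncard ≤ d := by
  set U : ℂ[X] := ∑ k ∈ Finset.range (d / 2 + 1), C (α (2 * k)) * X ^ k
  set V : ℂ[X] := ∑ k ∈ Finset.range (d / 2 + 1), C (α (2 * k + 1)) * X ^ k
  have hpUV : ∀ z, p z = U.eval ((‖z‖ ^ 2 : ℝ) : ℂ) + V.eval ((‖z‖ ^ 2 : ℝ) : ℂ) * z := by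
    intro z
    simp only [hp, U, V, eval_finsetSum, eval_mul, eval_C, eval_pow, eval_X, Finset.sum_mul,
      ← Finset.sum_add_distrib]
    refine Finset.sum_congr rfl fun k _ => ?_
    push_cast
    ring
  have hUV : U ≠ 0 ∨ V ≠ 0 := by
    obtain ⟨z, hz⟩ := hpne
    by_contra! h
    exact hz (by simp [hpUV, h.1, h.2])
  have hUdeg : 2 * U.natDegree ≤ d := by
    have : U.natDegree ≤ d / 2 + 1 - 1 := natDegree_sum_range_C_mul_X_pow_le _ _
    omega
  have hVdeg : V = 0 ∨ 2 * V.natDegree < d :=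
    eq_zero_or_two_mul_natDegree_sum_range_lt _ fun he => by
      rw [show 2 * (d / 2) + 1 = d + 1 by omega]
      exact hd he
  obtain ⟨hM, hS, hcount⟩ := finite_radii_and_two_mul_ncard_add_ncard_le hpUV hUV
  exact ⟨hM, hS, hcount.trans (natDegree_normPoly_le U V hUdeg hVdeg)⟩
end

section
/- Let J ∈ ℂ^{n×n} be a complex symmetric tridiagonal matrix with diagonal entries α₁,…,α_n ∈ ℂ and positive off-diagonal entries β₁,…,β_{n−1} > 0. Then there exist a unitary matrix Q ∈ ℂ^{n×n} and a diagonal matrix D = diag(λ₁,…,λ_n) such that D·conj(Q) = Q·J, and moreover no three of the moduli |λ₁|,…,|λ_n| are equal (at most two of the λ_k lie on any origin-centred circle) and the λ_k are pairwise distinct. -/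
/-!
Let `C x = J x̄`. It is antilinear and, `J` being symmetric, `⟪C x, y⟫ = ⟪C y, x⟫`. Then `C ∘ C` is
linear and positive: an eigenvector `w` has eigenvalue `σ² = ‖C w‖² / ‖w‖²`, and `u = C w + σ w`
(or `I • w` if that vanishes) satisfies `C u = σ u`. The orthogonal complement of such a vector is
`C`-invariant, so induction gives an orthonormal basis of con-eigenvectors (Takagi factorization);
their conjugates are the rows of `Q`.

The Jacobi structure bounds the multiplicities: `J̄` has a nonzero superdiagonal with zeros above it,
and `J J̄ = C ∘ C` has nonzero second superdiagonal `β_k β_{k+1}` with zeros above it, so a vector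
in `ker C` (resp. in an eigenspace of `C ∘ C`) is determined by its first coordinate (resp. its
first two). Hence `σ = 0` occurs at most once and every other `σ` at most twice; replacing the
second copy `u` of a repeated `σ` by `I • u` turns its con-eigenvalue into `-σ`, which makes all
`λ_k` distinct.
-/

open Complex Matrix Module Submodule
open scoped InnerProductSpace

section Orthonormal

variable {𝕜 E : Type*} [RCLike 𝕜] [NormedAddCommGroup E] [InnerProductSpace 𝕜 E]

theorem Orthonormal.snoc {k : ℕ} {v : Fin k → E} (hv : Orthonormal 𝕜 v) {u : E} (hu : ‖u‖ = 1)
    (huv : ∀ i, ⟪v i, u⟫_𝕜 = 0) : Orthonormal 𝕜 (Fin.snoc v u : Fin (k + 1) → E) := by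
  rw [orthonormal_iff_ite] at hv ⊢
  intro i j
  induction i using Fin.lastCases <;> induction j using Fin.lastCases <;>
    simp [hv, huv, inner_eq_zero_symm.1 (huv _), inner_self_eq_norm_sq_to_K, hu,
      (Fin.castSucc_lt_last _).ne, (Fin.castSucc_lt_last _).ne']

theorem Orthonormal.smul_of_norm_eq_one {ι : Type*} {v : ι → E} (hv : Orthonormal 𝕜 v)
    {c : ι → 𝕜} (hc : ∀ i, ‖c i‖ = 1) : Orthonormal 𝕜 fun i => c i • v i := by
  classical
  rw [orthonormal_iff_ite] at hv ⊢
  intro i j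
  rw [inner_smul_left, inner_smul_right, hv]
  split_ifs with h
  · subst h
    rw [mul_one, RCLike.conj_mul, hc]
    simp
  · simp

theorem LinearIndependent.ncard_le_finrank [FiniteDimensional 𝕜 E] {ι : Type*} {v : ι → E}
    (hv : LinearIndependent 𝕜 v) {s : Set ι} {K : Submodule 𝕜 E} (hs : ∀ i ∈ s, v i ∈ K) :
    s.ncard ≤ finrank 𝕜 K := by
  rcases s.finite_or_infinite with hfin | hinf
  · have := hfin.fintype
    rw [Set.ncard_eq_toFinset_card', Set.toFinset_card,
      ← finrank_span_eq_card (hv.comp _ Subtype.val_injective)]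
    exact Submodule.finrank_mono (span_le.2 (by rintro _ ⟨i, rfl⟩; exact hs i i.2))
  · simp [hinf.ncard]

end Orthonormal

theorem exists_injective_eq_or_eq_neg {ι : Type*} [LinearOrder ι] [Finite ι] {σ : ι → ℝ}
    (hσ : ∀ i, 0 ≤ σ i) (hzero : {i | σ i = 0}.ncard ≤ 1)
    (hfiber : ∀ r, {i | σ i = r}.ncard ≤ 2) :
    ∃ l : ι → ℝ, Function.Injective l ∧ ∀ i, l i = σ i ∨ l i = -σ i := by
  classical
  let l i := if ∃ j < i, σ j = σ i then -σ i else σ i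
  have hl : ∀ i, l i = σ i ∨ l i = -σ i := fun i => by unfold l; split_ifs <;> simp
  have habs : ∀ i, |l i| = σ i := fun i => by
    rcases hl i with h | h <;> rw [h] <;> simp [abs_of_nonneg (hσ i)]
  have hlt : ∀ i j, i < j → l i ≠ l j := by
    intro i j hij h
    have hs : σ i = σ j := by rw [← habs i, ← habs j, h]
    rcases (hσ j).eq_or_lt with hj0 | hpos
    · exact hij.ne ((Set.ncard_le_one_iff (Set.toFinite _)).1 hzero (hs.trans hj0.symm) hj0.symm)
    · have hlj : l j = -σ j := if_pos ⟨i, hij, hs⟩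
      obtain ⟨a, hai, ha⟩ : ∃ a < i, σ a = σ i := by
        by_contra hnone
        have : l i = σ i := if_neg hnone
        linarith
      have : 2 < {k | σ k = σ j}.ncard := (Set.two_lt_ncard_iff (Set.toFinite _)).2
        ⟨a, i, j, ha.trans hs, hs, rfl, hai.ne, (hai.trans hij).ne, hij.ne⟩
      linarith [hfiber (σ j)]
  refine ⟨l, fun i j h => ?_, hl⟩
  rcases lt_trichotomy i j with hij | hij | hij
  · exact absurd h (hlt i j hij)
  · exact hij
  · exact absurd h.symm (hlt j i hij)

namespace LinearMap

variable {E : Type*} [NormedAddCommGroup E] [InnerProductSpace ℂ E] {C : E →ₗ⋆[ℂ] E}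

theorem inner_apply_eq_zero_of_apply_eq_smul (hC : ∀ x y, ⟪C x, y⟫_ℂ = ⟪C y, x⟫_ℂ)
    {u x : E} {σ : ℝ} (hu : C u = (σ : ℂ) • u) (hx : ⟪u, x⟫_ℂ = 0) : ⟪u, C x⟫_ℂ = 0 := by
  rw [← inner_conj_symm, hC, hu, inner_smul_left, hx, mul_zero, map_zero]

theorem apply_apply_eq_of_apply_eq_smul {u : E} {σ : ℝ} (hu : C u = (σ : ℂ) • u) :
    C (C u) = ((σ * σ : ℝ) : ℂ) • u := by
  rw [hu, C.map_smulₛₗ, conj_ofReal, hu, smul_smul, ofReal_mul]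

theorem eigenvalue_comp_self_eq (hC : ∀ x y, ⟪C x, y⟫_ℂ = ⟪C y, x⟫_ℂ)
    {w : E} {μ : ℂ} (hw : C (C w) = μ • w) (hw0 : w ≠ 0) :
    μ = ((‖C w‖ / ‖w‖) ^ 2 : ℝ) := by
  have hnorm : (‖w‖ : ℂ) ≠ 0 := by exact_mod_cast norm_ne_zero_iff.2 hw0
  have key : (starRingEnd ℂ) μ * (‖w‖ : ℂ) ^ 2 = (‖C w‖ : ℂ) ^ 2 := by
    have h := hC (C w) w
    rwa [hw, inner_smul_left, inner_self_eq_norm_sq_to_K, inner_self_eq_norm_sq_to_K] at h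
  have := congrArg (starRingEnd ℂ) key
  simp only [map_mul, map_pow, Complex.conj_conj, Complex.conj_ofReal] at this
  push_cast
  rw [div_pow, eq_div_iff (pow_ne_zero 2 hnorm)]
  exact this

theorem exists_coeigenvector_mem [FiniteDimensional ℂ E]
    (hC : ∀ x y, ⟪C x, y⟫_ℂ = ⟪C y, x⟫_ℂ) {K : Submodule ℂ E}
    (hK : ∀ x ∈ K, C x ∈ K) (hK0 : K ≠ ⊥) :
    ∃ u ∈ K, u ≠ 0 ∧ ∃ σ : ℝ, 0 ≤ σ ∧ C u = (σ : ℂ) • u := by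
  have : Nontrivial K := Submodule.nontrivial_iff_ne_bot.2 hK0
  obtain ⟨μ, hμ⟩ := Module.End.exists_eigenvalue ((C ∘ₛₗ C).restrict fun x hx => hK _ (hK x hx))
  obtain ⟨⟨w, hwK⟩, hw⟩ := hμ.exists_hasEigenvector
  have hw0 : w ≠ 0 := fun h => hw.2 (Subtype.ext h)
  have hCCw : C (C w) = μ • w := congrArg Subtype.val hw.apply_eq_smul
  obtain ⟨σ, hσ, hμ⟩ : ∃ σ : ℝ, 0 ≤ σ ∧ μ = (σ : ℂ) * σ :=
    ⟨‖C w‖ / ‖w‖, by positivity, by rw [eigenvalue_comp_self_eq hC hCCw hw0]; push_cast; ring⟩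
  by_cases h : C w + (σ : ℂ) • w = 0
  · refine ⟨I • w, K.smul_mem _ hwK, smul_ne_zero I_ne_zero hw0, σ, hσ, ?_⟩
    rw [C.map_smulₛₗ, eq_neg_of_add_eq_zero_left h, conj_I, smul_neg, neg_smul, neg_neg, smul_comm]
  · refine ⟨C w + (σ : ℂ) • w, K.add_mem (hK w hwK) (K.smul_mem _ hwK), h, σ, hσ, ?_⟩
    rw [map_add, C.map_smulₛₗ, hCCw, conj_ofReal, hμ, smul_add, mul_smul, add_comm]

theorem exists_unit_coeigenvector_mem [FiniteDimensional ℂ E]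
    (hC : ∀ x y, ⟪C x, y⟫_ℂ = ⟪C y, x⟫_ℂ) {K : Submodule ℂ E}
    (hK : ∀ x ∈ K, C x ∈ K) (hK0 : K ≠ ⊥) :
    ∃ u ∈ K, ‖u‖ = 1 ∧ ∃ σ : ℝ, 0 ≤ σ ∧ C u = (σ : ℂ) • u := by
  obtain ⟨u, huK, hu0, σ, hσ, hCu⟩ := exists_coeigenvector_mem hC hK hK0
  refine ⟨((‖u‖⁻¹ : ℝ) : ℂ) • u, K.smul_mem _ huK, ?_, σ, hσ, ?_⟩
  · simpa using norm_smul_inv_norm (𝕜 := ℂ) hu0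
  · rw [C.map_smulₛₗ, conj_ofReal, hCu, smul_comm]

theorem exists_orthonormal_coeigenvectors [FiniteDimensional ℂ E]
    (hC : ∀ x y, ⟪C x, y⟫_ℂ = ⟪C y, x⟫_ℂ) {k : ℕ} (hk : k ≤ finrank ℂ E) :
    ∃ (v : Fin k → E) (σ : Fin k → ℝ), Orthonormal ℂ v ∧ (∀ i, 0 ≤ σ i) ∧
      ∀ i, C (v i) = (σ i : ℂ) • v i := by
  induction k with
  | zero =>
    exact ⟨Fin.elim0, Fin.elim0, ⟨fun i => i.elim0, fun i => i.elim0⟩, fun i => i.elim0,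
      fun i => i.elim0⟩
  | succ k ih =>
    obtain ⟨v, σ, hv, hσ, hCv⟩ := ih (by omega)
    have hmem : ∀ x, x ∈ ⨅ i, (ℂ ∙ v i)ᗮ ↔ ∀ i, ⟪v i, x⟫_ℂ = 0 := by
      simp only [Submodule.mem_iInf, Submodule.mem_orthogonal_singleton_iff_inner_right,
        implies_true]
    have hne : ⨅ i, (ℂ ∙ v i)ᗮ ≠ ⊥ := by
      rw [Ne, iInf_orthogonal, ← span_range_eq_iSup, orthogonal_eq_bot_iff]
      intro htop
      have := finrank_range_le_card (R := ℂ) v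
      rw [Set.finrank, htop, finrank_top, Fintype.card_fin] at this
      omega
    obtain ⟨u, huK, hu, s, hs, hCu⟩ := exists_unit_coeigenvector_mem hC
      (fun x hx => (hmem _).2 fun i =>
        inner_apply_eq_zero_of_apply_eq_smul hC (hCv i) ((hmem x).1 hx i)) hne
    refine ⟨Fin.snoc v u, Fin.snoc σ s, hv.snoc hu ((hmem u).1 huK), ?_, ?_⟩
    · intro i; induction i using Fin.lastCases <;> simp [hs, hσ]
    · intro i; induction i using Fin.lastCases <;> simp [hCu, hCv]

theorem exists_orthonormal_coeigenvectors_injective [FiniteDimensional ℂ E]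
    (hC : ∀ x y, ⟪C x, y⟫_ℂ = ⟪C y, x⟫_ℂ) (hker : finrank ℂ (ker C) ≤ 1)
    (heig : ∀ μ, finrank ℂ (Module.End.eigenspace (C ∘ₛₗ C) μ) ≤ 2)
    {k : ℕ} (hk : k ≤ finrank ℂ E) :
    ∃ (v : Fin k → E) (l : Fin k → ℝ), Orthonormal ℂ v ∧ (∀ i, C (v i) = (l i : ℂ) • v i) ∧
      Function.Injective l ∧ ∀ r, {i | |l i| = r}.ncard ≤ 2 := by
  obtain ⟨v, σ, hv, hσ, hCv⟩ := exists_orthonormal_coeigenvectors hC hk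
  have hfiber : ∀ r, {i | σ i = r}.ncard ≤ 2 := fun r =>
    (hv.linearIndependent.ncard_le_finrank fun i (hi : σ i = r) =>
      Module.End.mem_eigenspace_iff.2 (hi ▸ apply_apply_eq_of_apply_eq_smul (hCv i))).trans
      (heig _)
  have hzero : {i | σ i = 0}.ncard ≤ 1 :=
    (hv.linearIndependent.ncard_le_finrank fun i (hi : σ i = 0) =>
      mem_ker.2 (by rw [hCv i, hi, ofReal_zero, zero_smul])).trans hker
  obtain ⟨l, hl, hlσ⟩ := exists_injective_eq_or_eq_neg hσ hzero hfiber
  have hlabs : ∀ i, |l i| = σ i := fun i => by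
    rcases hlσ i with h | h <;> rw [h] <;> simp [abs_of_nonneg (hσ i)]
  -- `C (I • u) = -I • C u`, so rotating by `I` realises the sign flip
  refine ⟨fun i => (if l i = σ i then 1 else I) • v i, l,
    hv.smul_of_norm_eq_one fun i => by split_ifs <;> simp, fun i => ?_, hl,
    by simpa [hlabs] using hfiber⟩
  dsimp only
  split_ifs with h
  · rw [one_smul, hCv, h]
  · rw [C.map_smulₛₗ, hCv, (hlσ i).resolve_left h, conj_I, smul_comm, ofReal_neg, neg_smul,
      smul_neg, neg_smul]

end LinearMap

theorem EuclideanSpace.finrank_le_of_forall_eq_zero {𝕜 : Type*} [RCLike 𝕜] {n p : ℕ}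
    {K : Submodule 𝕜 (EuclideanSpace 𝕜 (Fin n))}
    (hK : ∀ x ∈ K, (∀ i : Fin n, (i : ℕ) < p → x i = 0) → x = 0) : finrank 𝕜 K ≤ p := by
  rcases le_or_gt n p with hnp | hpn
  · exact (Submodule.finrank_le K).trans (by simpa using hnp)
  let f : K →ₗ[𝕜] Fin p → 𝕜 := LinearMap.pi fun k =>
    (EuclideanSpace.proj (Fin.castLE hpn.le k) : EuclideanSpace 𝕜 (Fin n) →L[𝕜] 𝕜).toLinearMap ∘ₗ
      K.subtype
  have hf : Function.Injective f := by
    rw [← LinearMap.ker_eq_bot, LinearMap.ker_eq_bot']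
    intro x hx
    exact Subtype.ext (hK x x.2 fun i hi => congrFun hx ⟨i, hi⟩)
  simpa using LinearMap.finrank_le_finrank_of_injective hf

namespace Matrix

section Band

variable {R S : Type*} {n : ℕ}

structure HasExactUpperBandwidth [Zero R] (A : Matrix (Fin n) (Fin n) R) (p : ℕ) : Prop where
  eq_zero : ∀ i j : Fin n, (i : ℕ) + p < j → A i j = 0
  ne_zero : ∀ i j : Fin n, (i : ℕ) + p = j → A i j ≠ 0

theorem HasExactUpperBandwidth.map [Semiring R] [Semiring S] {A : Matrix (Fin n) (Fin n) R}
    {p : ℕ} (hA : A.HasExactUpperBandwidth p) {f : R →+* S} (hf : Function.Injective f) :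
    (A.map f).HasExactUpperBandwidth p where
  eq_zero i j h := by simp [hA.eq_zero i j h]
  ne_zero i j h := by simpa using (map_ne_zero_iff f hf).2 (hA.ne_zero i j h)

theorem HasExactUpperBandwidth.mul [Semiring R] [NoZeroDivisors R]
    {A B : Matrix (Fin n) (Fin n) R} {p q : ℕ} (hA : A.HasExactUpperBandwidth p)
    (hB : B.HasExactUpperBandwidth q) : (A * B).HasExactUpperBandwidth (p + q) where
  eq_zero i j h := by
    rw [mul_apply]
    refine Finset.sum_eq_zero fun m _ => ?_
    rcases lt_or_ge ((i : ℕ) + p) m with hm | hm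
    · rw [hA.eq_zero i m hm, zero_mul]
    · rw [hB.eq_zero m j (by omega), mul_zero]
  ne_zero i j h := by
    rw [mul_apply, Finset.sum_eq_single ⟨i + p, by omega⟩]
    · exact mul_ne_zero (hA.ne_zero _ _ rfl) (hB.ne_zero _ _ (by simp only; omega))
    · intro m _ hm
      rcases lt_or_gt_of_ne (Fin.val_ne_of_ne hm) with hm | hm
      · rw [hB.eq_zero m j (by simp only at hm; omega), mul_zero]
      · rw [hA.eq_zero i m hm, zero_mul]
    · simp

theorem HasExactUpperBandwidth.eq_zero_of_mulVec_eq_smul [Ring R] [NoZeroDivisors R]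
    {A : Matrix (Fin n) (Fin n) R} {p : ℕ} (hA : A.HasExactUpperBandwidth p) (hp : 0 < p)
    {x : Fin n → R} {c : R} (hx : A *ᵥ x = c • x) (h0 : ∀ i : Fin n, (i : ℕ) < p → x i = 0) :
    x = 0 := by
  suffices ∀ m (hm : m < n), x ⟨m, hm⟩ = 0 from funext fun i => this i i.2
  intro m
  induction m using Nat.strong_induction_on with
  | _ m ih =>
    intro hm
    rcases lt_or_ge m p with hmp | hmp
    · exact h0 _ hmp
    -- row `m - p` of `A x = c x` involves `x m` and earlier entries only
    have hrow := congrFun hx ⟨m - p, by omega⟩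
    rw [mulVec, dotProduct, Finset.sum_eq_single ⟨m, hm⟩, Pi.smul_apply, ih (m - p) (by omega),
      smul_zero] at hrow
    · exact (mul_eq_zero.1 hrow).resolve_left (hA.ne_zero _ _ (by simp only; omega))
    · intro j _ hj
      rcases lt_or_gt_of_ne (Fin.val_ne_of_ne hj) with h | h
      · rw [ih j h j.2, mul_zero]
      · rw [hA.eq_zero _ _ (by simp only at h ⊢; omega), zero_mul]
    · simp

theorem HasExactUpperBandwidth.finrank_le {𝕜 : Type*} [RCLike 𝕜] {A : Matrix (Fin n) (Fin n) 𝕜}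
    {p : ℕ} (hA : A.HasExactUpperBandwidth p) (hp : 0 < p)
    {K : Submodule 𝕜 (EuclideanSpace 𝕜 (Fin n))} {c : 𝕜}
    (hK : ∀ x ∈ K, A *ᵥ x.ofLp = c • x.ofLp) : finrank 𝕜 K ≤ p :=
  EuclideanSpace.finrank_le_of_forall_eq_zero fun x hx h0 =>
    (WithLp.ofLp_eq_zero 2).1 (hA.eq_zero_of_mulVec_eq_smul hp (hK x hx) h0)

end Band

section ConjLin

variable {𝕜 ι : Type*} [RCLike 𝕜] [Fintype ι]

def toEuclideanConjLin (A : Matrix ι ι 𝕜) : EuclideanSpace 𝕜 ι →ₗ⋆[𝕜] EuclideanSpace 𝕜 ι where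
  toFun x := WithLp.toLp 2 (A *ᵥ star x.ofLp)
  map_add' x y := by simp [mulVec_add]
  map_smul' c x := by simp [mulVec_smul]

@[simp]
theorem toEuclideanConjLin_apply (A : Matrix ι ι 𝕜) (x : EuclideanSpace 𝕜 ι) :
    A.toEuclideanConjLin x = WithLp.toLp 2 (A *ᵥ star x.ofLp) := rfl

theorem star_mulVec_star (A : Matrix ι ι 𝕜) (x : ι → 𝕜) :
    star (A *ᵥ star x) = A.map (starRingEnd 𝕜) *ᵥ x := by
  ext i
  simp [mulVec, dotProduct, mul_comm]

theorem inner_toEuclideanConjLin_comm {A : Matrix ι ι 𝕜} (hA : Aᵀ = A)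
    (x y : EuclideanSpace 𝕜 ι) :
    ⟪A.toEuclideanConjLin x, y⟫_𝕜 = ⟪A.toEuclideanConjLin y, x⟫_𝕜 := by
  have hsymm : (A.map (starRingEnd 𝕜))ᵀ = A.map (starRingEnd 𝕜) := by rw [← transpose_map, hA]
  simp only [EuclideanSpace.inner_eq_star_dotProduct, toEuclideanConjLin_apply, star_mulVec_star]
  rw [dotProduct_comm, ← vecMul_transpose, hsymm, dotProduct_mulVec]

theorem mem_ker_toEuclideanConjLin_iff {A : Matrix ι ι 𝕜} {x : EuclideanSpace 𝕜 ι} :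
    x ∈ LinearMap.ker A.toEuclideanConjLin ↔ A.map (starRingEnd 𝕜) *ᵥ x.ofLp = 0 := by
  rw [LinearMap.mem_ker, toEuclideanConjLin_apply, WithLp.toLp_eq_zero, ← star_mulVec_star,
    star_eq_zero]

theorem mem_eigenspace_toEuclideanConjLin_comp_iff [DecidableEq ι] {A : Matrix ι ι 𝕜} {μ : 𝕜}
    {x : EuclideanSpace 𝕜 ι} :
    x ∈ Module.End.eigenspace (A.toEuclideanConjLin ∘ₛₗ A.toEuclideanConjLin) μ ↔
      (A * A.map (starRingEnd 𝕜)) *ᵥ x.ofLp = μ • x.ofLp := by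
  rw [Module.End.mem_eigenspace_iff, LinearMap.comp_apply, toEuclideanConjLin_apply,
    toEuclideanConjLin_apply, star_mulVec_star, mulVec_mulVec, ← (WithLp.ofLp_injective 2).eq_iff]
  rfl

def conjRowMatrix (v : ι → EuclideanSpace 𝕜 ι) : Matrix ι ι 𝕜 :=
  of fun i j => star (v i j)

theorem conjRowMatrix_mem_unitaryGroup [DecidableEq ι] {v : ι → EuclideanSpace 𝕜 ι}
    (hv : Orthonormal 𝕜 v) : conjRowMatrix v ∈ unitaryGroup ι 𝕜 := by
  rw [orthonormal_iff_ite] at hv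
  rw [mem_unitaryGroup_iff]
  ext i j
  rw [mul_apply, one_apply, ← hv, EuclideanSpace.inner_eq_star_dotProduct]
  simp [conjRowMatrix, dotProduct, mul_comm]

theorem diagonal_mul_map_conjRowMatrix [DecidableEq ι] {A : Matrix ι ι 𝕜} (hA : Aᵀ = A)
    {v : ι → EuclideanSpace 𝕜 ι} {l : ι → 𝕜} (hv : ∀ i, A.toEuclideanConjLin (v i) = l i • v i) :
    diagonal l * (conjRowMatrix v).map (starRingEnd 𝕜) = conjRowMatrix v * A := by
  ext i j
  have hrow : star (v i).ofLp ᵥ* A = A *ᵥ star (v i).ofLp := by rw [← vecMul_transpose, hA]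
  have hj := congrArg (fun x => x j) (hv i)
  simp only [toEuclideanConjLin_apply, PiLp.toLp_apply, PiLp.smul_apply, smul_eq_mul] at hj
  rw [diagonal_mul]
  change _ = (star (v i).ofLp ᵥ* A) j
  rw [hrow, hj]
  simp [conjRowMatrix]

end ConjLin

end Matrix

def jacobiMatrix {n : ℕ} (α : Fin n → ℂ) (β : ℕ → ℝ) : Matrix (Fin n) (Fin n) ℂ :=
  of fun i j =>
    if (i : ℕ) = j then α i
    else if (i : ℕ) + 1 = j then (β i : ℂ)
    else if (j : ℕ) + 1 = i then (β j : ℂ) else 0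

theorem jacobiMatrix_transpose {n : ℕ} (α : Fin n → ℂ) (β : ℕ → ℝ) :
    (jacobiMatrix α β)ᵀ = jacobiMatrix α β := by
  ext i j
  simp only [jacobiMatrix, transpose_apply, of_apply]
  split_ifs <;> first | rfl | omega | (congr 1; ext; omega)

theorem jacobiMatrix_hasExactUpperBandwidth {n : ℕ} (α : Fin n → ℂ) {β : ℕ → ℝ}
    (hβ : ∀ k, k + 1 < n → 0 < β k) : (jacobiMatrix α β).HasExactUpperBandwidth 1 where
  eq_zero i j h := by
    simp only [jacobiMatrix, of_apply]
    rw [if_neg (by omega), if_neg (by omega), if_neg (by omega)]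
  ne_zero i j h := by
    simp only [jacobiMatrix, of_apply]
    rw [if_neg (by omega), if_pos h]
    exact_mod_cast (hβ i (by omega)).ne'

/-- Every complex symmetric tridiagonal (Jacobi) matrix with positive
off-diagonal entries admits a con-diagonalization `D conj(Q) = Q J` with `Q` unitary,
the `λ_k` pairwise distinct and at most two on any origin-centred circle. -/
theorem stmt12 (n : ℕ) (α : Fin n → ℂ) (β : ℕ → ℝ) (hβ : ∀ k, k + 1 < n → 0 < β k)
    (J : Matrix (Fin n) (Fin n) ℂ)
    (hJ : ∀ i j : Fin n, J i j =
      if (i : ℕ) = (j : ℕ) then α i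
      else if (i : ℕ) + 1 = (j : ℕ) then (β (i : ℕ) : ℂ)
      else if (j : ℕ) + 1 = (i : ℕ) then (β (j : ℕ) : ℂ) else 0) :
    ∃ (Q : Matrix (Fin n) (Fin n) ℂ) (l : Fin n → ℂ),
      Q ∈ Matrix.unitaryGroup (Fin n) ℂ ∧
      Matrix.diagonal l * Q.map (starRingEnd ℂ) = Q * J ∧
      Function.Injective l ∧
      ∀ r : ℝ, Set.ncard {k : Fin n | ‖l k‖ = r} ≤ 2 := by
  obtain rfl : J = jacobiMatrix α β := Matrix.ext hJ
  set C := (jacobiMatrix α β).toEuclideanConjLin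
  have hJt := jacobiMatrix_transpose α β
  have hband := jacobiMatrix_hasExactUpperBandwidth α hβ
  have hband_conj := hband.map (starRingEnd ℂ).injective
  have hker : finrank ℂ (LinearMap.ker C) ≤ 1 :=
    hband_conj.finrank_le one_pos (c := 0) fun x hx => by
      rw [zero_smul]; exact mem_ker_toEuclideanConjLin_iff.1 hx
  have heig : ∀ μ, finrank ℂ (Module.End.eigenspace (C ∘ₛₗ C) μ) ≤ 2 := fun μ =>
    (hband.mul hband_conj).finrank_le two_pos fun x hx =>
      mem_eigenspace_toEuclideanConjLin_comp_iff.1 hx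
  obtain ⟨v, l, hv, hCv, hl, hcard⟩ := LinearMap.exists_orthonormal_coeigenvectors_injective
    (inner_toEuclideanConjLin_comm hJt) hker heig finrank_euclideanSpace_fin.ge
  exact ⟨conjRowMatrix v, fun i => l i, conjRowMatrix_mem_unitaryGroup hv,
    diagonal_mul_map_conjRowMatrix hJt hCv, ofReal_injective.comp hl, by simpa using hcard⟩
end

section
/- Let J ∈ ℂ^{n×n} be a complex symmetric tridiagonal matrix with diagonal α₁,…,α_n ∈ ℂ and off-diagonals β₁,…,β_{n−1} > 0, and suppose Σ·conj(U) = U·J with U unitary and Σ = diag(σ₁,…,σ_n) nonnegative diagonal. Then no three of σ₁,…,σ_n are equal. -/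
/-!
Fix `c` and let `R` be the rows `i` of `U` with `σ i = c`. Row by row, `Σ conj(U) = U J` says
`c • conj(R) = R J`. Since `J` is tridiagonal with nonzero subdiagonal, column `p` of this identity
solves for column `p + 1` of `R` in terms of columns `p`, `p - 1` and the conjugate of column `p`.
Hence every column of `R` lies in the span of its first column `w` and of `conj w`, so `rank R ≤ 2`.
But the rows of `R` are orthonormal, so `rank R` is the number of rows.
-/

open Complex Matrix Module

theorem Submodule.finrank_span_pair_le {K E : Type*} [DivisionRing K] [AddCommGroup E] [Module K E]
    (a b : E) : finrank K (Submodule.span K ({a, b} : Set E)) ≤ 2 := by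
  classical
  have h := (finrank_span_finset_le_card (R := K) ({a, b} : Finset E)).trans Finset.card_le_two
  rwa [Finset.coe_pair] at h

theorem Submodule.star_mem_span_pair_star {K E : Type*} [CommRing K] [StarRing K] [AddCommGroup E]
    [Module K E] [StarAddMonoid E] [StarModule K E] {w x : E}
    (hx : x ∈ Submodule.span K {w, star w}) : star x ∈ Submodule.span K {w, star w} := by
  obtain ⟨a, b, rfl⟩ := Submodule.mem_span_pair.mp hx
  exact Submodule.mem_span_pair.mpr ⟨star b, star a, by simp [add_comm]⟩

theorem Matrix.rank_le_finrank_of_col_mem {K m n : Type*} [Field K] [Fintype m] [Fintype n]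
    {A : Matrix m n K} {W : Submodule K (m → K)} (hA : ∀ j, A.col j ∈ W) :
    A.rank ≤ finrank K W := by
  rw [rank_eq_finrank_span_cols]
  exact Submodule.finrank_mono (Submodule.span_le.mpr (Set.range_subset_iff.mpr hA))

theorem Matrix.card_le_rank_of_mul_conjTranspose_eq_one {K m n : Type*} [Field K] [StarRing K]
    [Fintype m] [DecidableEq m] [Fintype n] {A : Matrix m n K} (hA : A * Aᴴ = 1) :
    Fintype.card m ≤ A.rank := by
  simpa [hA, rank_one] using rank_mul_le_left A Aᴴ

/-- `J` is upper Hessenberg with nonzero subdiagonal, so the identity `c • star v = v J` determines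
`v (k + 1)` from `v 0, …, v k`. -/
theorem Submodule.forall_mem_of_star_smul_eq_sum_of_upperHessenberg {K E : Type*} [Field K]
    [AddCommGroup E] [Module K E] [Star E] {n : ℕ} {W : Submodule K E}
    (hW : ∀ x ∈ W, star x ∈ W) {J : Matrix (Fin (n + 1)) (Fin (n + 1)) K}
    (hJ : ∀ p q : Fin (n + 1), (p : ℕ) + 1 < q → J q p = 0)
    (hJsub : ∀ p q : Fin (n + 1), (q : ℕ) = p + 1 → J q p ≠ 0)
    {c : K} {v : Fin (n + 1) → E} (hv : ∀ p, c • star (v p) = ∑ q, J q p • v q) (h0 : v 0 ∈ W) :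
    ∀ p, v p ∈ W := by
  suffices h : ∀ k (hk : k < n + 1), v ⟨k, hk⟩ ∈ W from fun p => h p p.isLt
  intro k
  induction k using Nat.strong_induction_on with
  | _ k ih =>
    intro hk
    rcases k with _ | k
    · exact h0
    set p : Fin (n + 1) := ⟨k, by omega⟩
    set q : Fin (n + 1) := ⟨k + 1, hk⟩
    have hrest : ∑ r ∈ Finset.univ.erase q, J r p • v r ∈ W := by
      refine W.sum_mem fun r hr => ?_
      by_cases hrk : (r : ℕ) ≤ k
      · exact W.smul_mem _ (ih r (by omega) r.isLt)
      · have hrq : (r : ℕ) ≠ k + 1 := fun h => Finset.ne_of_mem_erase hr (Fin.ext h)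
        rw [hJ p r (show k + 1 < (r : ℕ) by omega), zero_smul]
        exact W.zero_mem
    have hstep : J q p • v q = c • star (v p) - ∑ r ∈ Finset.univ.erase q, J r p • v r := by
      rw [hv p, ← Finset.add_sum_erase _ _ (Finset.mem_univ q), add_sub_cancel_right]
    have hq : J q p • v q ∈ W :=
      hstep ▸ W.sub_mem (W.smul_mem c (hW _ (ih k (by omega) _))) hrest
    exact (W.smul_mem_iff (hJsub p q rfl)).mp hq

theorem stmt13_general (n : ℕ) (α : Fin n → ℂ) (β : ℕ → ℝ) (hβ : ∀ k, k + 1 < n → 0 < β k)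
    (J : Matrix (Fin n) (Fin n) ℂ)
    (hJ : ∀ i j : Fin n, J i j =
      if (i : ℕ) = (j : ℕ) then α i
      else if (i : ℕ) + 1 = (j : ℕ) then (β (i : ℕ) : ℂ)
      else if (j : ℕ) + 1 = (i : ℕ) then (β (j : ℕ) : ℂ) else 0)
    (U : Matrix (Fin n) (Fin n) ℂ) (hU : U ∈ Matrix.unitaryGroup (Fin n) ℂ)
    (σ : Fin n → ℝ)
    (hfac : Matrix.diagonal (fun i => (σ i : ℂ)) * U.map (starRingEnd ℂ) = U * J) :
    ∀ c : ℝ, Set.ncard {i : Fin n | σ i = c} ≤ 2 := by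
  intro c
  obtain _ | n := n
  · simp [Set.eq_empty_of_isEmpty]
  set S := {i : Fin (n + 1) | σ i = c}
  let R : Matrix S (Fin (n + 1)) ℂ := U.submatrix (↑) id
  have hR : R * Rᴴ = 1 := by
    rw [conjTranspose_submatrix, ← submatrix_mul _ _ _ _ _ Function.bijective_id,
      ← star_eq_conjTranspose, mem_unitaryGroup_iff.mp hU]
    exact submatrix_one_embedding (Function.Embedding.subtype _)
  have hJ0 : ∀ p q : Fin (n + 1), (p : ℕ) + 1 < q → J q p = 0 := by
    intro p q hpq
    rw [hJ, if_neg, if_neg, if_neg] <;> omega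
  have hJsub : ∀ p q : Fin (n + 1), (q : ℕ) = p + 1 → J q p ≠ 0 := by
    intro p q hpq
    rw [hJ, if_neg (by omega), if_neg (by omega), if_pos hpq.symm]
    exact_mod_cast (hβ p (by omega)).ne'
  have hRJ : ∀ p, (c : ℂ) • star (R.col p) = ∑ q, J q p • R.col q := by
    intro p; funext i
    have h := congrFun (congrFun hfac i) p
    rw [diagonal_mul, map_apply, mul_apply, i.2.out] at h
    simp [R, h, mul_comm]
  have hcols := Submodule.forall_mem_of_star_smul_eq_sum_of_upperHessenberg
    (W := Submodule.span ℂ {R.col 0, star (R.col 0)})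
    (fun _ => Submodule.star_mem_span_pair_star) hJ0 hJsub hRJ (Submodule.subset_span (by simp))
  calc S.ncard = Fintype.card S := (Nat.card_coe_set_eq S).symm.trans Nat.card_eq_fintype_card
    _ ≤ R.rank := card_le_rank_of_mul_conjTranspose_eq_one hR
    _ ≤ _ := rank_le_finrank_of_col_mem hcols
    _ ≤ 2 := Submodule.finrank_span_pair_le _ _

/-- If `Σ conj(U) = U J` with `U` unitary, `Σ` nonnegative diagonal and `J`
a complex symmetric tridiagonal matrix with positive off-diagonals, then no three of the
diagonal entries `σ₁, …, σ_n` of `Σ` are equal. -/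
theorem stmt13 (n : ℕ) (α : Fin n → ℂ) (β : ℕ → ℝ) (hβ : ∀ k, k + 1 < n → 0 < β k)
    (J : Matrix (Fin n) (Fin n) ℂ)
    (hJ : ∀ i j : Fin n, J i j =
      if (i : ℕ) = (j : ℕ) then α i
      else if (i : ℕ) + 1 = (j : ℕ) then (β (i : ℕ) : ℂ)
      else if (j : ℕ) + 1 = (i : ℕ) then (β (j : ℕ) : ℂ) else 0)
    (U : Matrix (Fin n) (Fin n) ℂ) (hU : U ∈ Matrix.unitaryGroup (Fin n) ℂ)
    (σ : Fin n → ℝ) (hσ : ∀ i, 0 ≤ σ i)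
    (hfac : Matrix.diagonal (fun i => (σ i : ℂ)) * U.map (starRingEnd ℂ) = U * J) :
    ∀ c : ℝ, Set.ncard {i : Fin n | σ i = c} ≤ 2 :=
  stmt13_general n α β hβ J hJ U hU σ hfac
end

section
/- Let μ be a compactly supported Borel probability measure on ℂ. Then there exists a compactly supported symmetric biradial measure ρ on ℂ such that ∫ p dμ = ∫ p dρ for every p of the form p(λ) = u(|λ|²) + v(|λ|²)λ with u, v complex polynomials. -/
/-!
Disintegrate `μ` along the modulus: `μ = ∫ κ_r dν(r)`, where `ν` is the law of `‖z‖` and `κ_r`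
is a probability measure on the circle `‖z‖ = r`. A test function `A ‖z‖ + B ‖z‖ * z` integrates
against `κ_r` to `A r + B r * c r`, where `c r` is the barycentre of `κ_r`, and `‖c r‖ ≤ r`.
So replacing `κ_r` by the two antipodal atoms `±r e^{i arg (c r)}` with weights
`(1 ± ‖c r‖ / r) / 2`, which have total mass `1` and barycentre `c r`, changes none of these
integrals.
-/

open Complex MeasureTheory ProbabilityTheory Metric Set
open scoped NNReal

theorem Continuous.integrable_of_ae_mem_compact {X E : Type*} [TopologicalSpace X] [T2Space X]
    [MeasurableSpace X] [OpensMeasurableSpace X] [NormedAddCommGroup E] {μ : Measure X}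
    [IsFiniteMeasure μ] {f : X → E} {K : Set X} (hf : Continuous f) (hK : IsCompact K)
    (hμK : ∀ᵐ x ∂μ, x ∈ K) : Integrable f μ := by
  rw [← Measure.restrict_eq_self_of_ae_mem hμK]
  exact hf.continuousOn.integrableOn_compact hK

section MapWithDensity

variable {α β E : Type*} [MeasurableSpace α] [MeasurableSpace β] [NormedAddCommGroup E]
  [NormedSpace ℝ E] {ν : Measure α} {w : α → ℝ≥0} {g : α → β} {F : β → E}

theorem integrable_map_withDensity_iff (hw : Measurable w) (hg : Measurable g)
    (hF : StronglyMeasurable F) :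
    Integrable F ((ν.withDensity fun a => w a).map g) ↔ Integrable (fun a => w a • F (g a)) ν := by
  rw [integrable_map_measure hF.aestronglyMeasurable hg.aemeasurable,
    integrable_withDensity_iff_integrable_smul hw]
  rfl

theorem integral_map_withDensity (hw : Measurable w) (hg : Measurable g)
    (hF : StronglyMeasurable F) :
    ∫ x, F x ∂(ν.withDensity fun a => w a).map g = ∫ a, w a • F (g a) ∂ν := by
  rw [integral_map hg.aemeasurable hF.aestronglyMeasurable,
    integral_withDensity_eq_integral_smul hw]

end MapWithDensity

section CircleDisintegration

variable {μ : Measure ℂ} [IsFiniteMeasure μ]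

noncomputable def circleBarycenter (μ : Measure ℂ) [IsFiniteMeasure μ] (r : ℝ) : ℂ :=
  ∫ z, z ∂condDistrib id (‖·‖) μ r

theorem measurable_circleBarycenter : Measurable (circleBarycenter μ) :=
  (measurable_snd.stronglyMeasurable.integral_condDistrib (X := (‖·‖)) (Y := id)
    (μ := μ)).measurable

theorem ae_ae_norm_eq_condDistrib :
    ∀ᵐ r ∂μ.map (‖·‖), ∀ᵐ z ∂condDistrib id (‖·‖) μ r, ‖z‖ = r := by
  have hgraph : ∀ᵐ p ∂μ.map (fun z => (‖z‖, id z)), ‖p.2‖ = p.1 :=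
    (ae_map_iff (by fun_prop) (measurableSet_eq_fun (by fun_prop) (by fun_prop))).2
      (ae_of_all _ fun _ => rfl)
  rw [← compProd_map_condDistrib aemeasurable_id] at hgraph
  exact Measure.ae_ae_of_ae_compProd hgraph

theorem norm_circleBarycenter_le : ∀ᵐ r ∂μ.map (‖·‖), ‖circleBarycenter μ r‖ ≤ r := by
  filter_upwards [ae_ae_norm_eq_condDistrib] with r hr
  simpa [circleBarycenter] using norm_integral_le_of_norm_le_const (hr.mono fun _ hz => hz.le)

theorem integral_radial_add_mul_eq_integral_circleBarycenter {A B : ℝ → ℂ} (hA : Continuous A)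
    (hB : Continuous B) {K : Set ℂ} (hK : IsCompact K) (hμK : ∀ᵐ z ∂μ, z ∈ K) :
    ∫ z, A ‖z‖ + B ‖z‖ * z ∂μ = ∫ r, A r + B r * circleBarycenter μ r ∂μ.map (‖·‖) := by
  set f : ℝ × ℂ → ℂ := fun p => A p.1 + B p.1 * p.2
  have hf : Continuous f := by fun_prop
  have hgraph : Measurable fun z : ℂ => (‖z‖, id z) := by fun_prop
  have hfμ : Integrable f (μ.map fun z => (‖z‖, id z)) :=
    (integrable_map_measure hf.aestronglyMeasurable hgraph.aemeasurable).2
      ((hf.comp (by fun_prop)).integrable_of_ae_mem_compact hK hμK)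
  rw [← compProd_map_condDistrib aemeasurable_id] at hfμ
  calc ∫ z, A ‖z‖ + B ‖z‖ * z ∂μ = ∫ p, f p ∂μ.map fun z => (‖z‖, id z) :=
        (integral_map hgraph.aemeasurable hf.aestronglyMeasurable).symm
    _ = ∫ r, ∫ z, f (r, z) ∂condDistrib id (‖·‖) μ r ∂μ.map (‖·‖) := by
        rw [← compProd_map_condDistrib aemeasurable_id]
        exact Measure.integral_compProd hfμ
    _ = ∫ r, A r + B r * circleBarycenter μ r ∂μ.map (‖·‖) := by
        refine integral_congr_ae ?_
        filter_upwards [ae_ae_norm_eq_condDistrib] with r hr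
        have hid : Integrable (fun z : ℂ => z) (condDistrib id (‖·‖) μ r) :=
          Integrable.of_bound aestronglyMeasurable_id r (hr.mono fun _ hz => hz.le)
        change ∫ z, A r + B r * z ∂_ = _
        rw [integral_add (integrable_const _) (hid.const_mul _), integral_const_mul]
        simp [circleBarycenter]

end CircleDisintegration

section TwoPoint

noncomputable def circlePoint (c : ℂ) (r : ℝ) : ℂ := r * exp (arg c * I)

/-- Weights giving the atoms `±circlePoint c r` the centre of mass `c` when `‖c‖ ≤ r`
(at `r = 0` the junk value `‖c‖ / 0 = 0` makes both weights `1 / 2`). -/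
noncomputable def twoPointWeight₁ (c : ℂ) (r : ℝ) : ℝ≥0 := Real.toNNReal ((1 + ‖c‖ / r) / 2)

noncomputable def twoPointWeight₂ (c : ℂ) (r : ℝ) : ℝ≥0 := Real.toNNReal ((1 - ‖c‖ / r) / 2)

variable {c : ℂ} {r : ℝ}

theorem norm_circlePoint : ‖circlePoint c r‖ = |r| := by
  simp [circlePoint, norm_exp_ofReal_mul_I]

theorem coe_twoPointWeight₁ (hc : ‖c‖ ≤ r) : (twoPointWeight₁ c r : ℝ) = (1 + ‖c‖ / r) / 2 :=
  Real.coe_toNNReal _ (by have := div_nonneg (norm_nonneg c) ((norm_nonneg c).trans hc); linarith)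

theorem coe_twoPointWeight₂ (hc : ‖c‖ ≤ r) : (twoPointWeight₂ c r : ℝ) = (1 - ‖c‖ / r) / 2 :=
  Real.coe_toNNReal _ (by have := div_le_one_of_le₀ hc ((norm_nonneg c).trans hc); linarith)

theorem twoPointWeight_add (hc : ‖c‖ ≤ r) : twoPointWeight₁ c r + twoPointWeight₂ c r = 1 := by
  ext
  push_cast
  rw [coe_twoPointWeight₁ hc, coe_twoPointWeight₂ hc]
  ring

theorem twoPointWeight_sub_smul_circlePoint (hc : ‖c‖ ≤ r) :
    ((twoPointWeight₁ c r : ℝ) - twoPointWeight₂ c r) • circlePoint c r = c := by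
  rw [coe_twoPointWeight₁ hc, coe_twoPointWeight₂ hc, show ∀ s : ℝ, (1 + s) / 2 - (1 - s) / 2 = s
    by intro; ring]
  rcases ((norm_nonneg c).trans hc).eq_or_lt with rfl | hr
  · simp_all
  · rw [circlePoint, real_smul, ← mul_assoc, ← ofReal_mul, div_mul_cancel₀ _ hr.ne',
      norm_mul_exp_arg_mul_I]

theorem twoPointWeight_smul_add_smul (A B : ℝ → ℂ) (hc : ‖c‖ ≤ r) :
    twoPointWeight₁ c r • (A ‖circlePoint c r‖ + B ‖circlePoint c r‖ * circlePoint c r) +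
      twoPointWeight₂ c r • (A ‖-circlePoint c r‖ + B ‖-circlePoint c r‖ * -circlePoint c r) =
      A r + B r * c := by
  have hsum : ((twoPointWeight₁ c r : ℝ) : ℂ) + (twoPointWeight₂ c r : ℝ) = 1 := by
    exact_mod_cast congrArg NNReal.toReal (twoPointWeight_add hc)
  have hdiff := twoPointWeight_sub_smul_circlePoint hc
  rw [real_smul] at hdiff
  rw [norm_neg, norm_circlePoint, abs_of_nonneg ((norm_nonneg c).trans hc), NNReal.smul_def,
    NNReal.smul_def, real_smul, real_smul]
  push_cast at hdiff
  linear_combination A r * hsum + B r * hdiff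

end TwoPoint

section TwoPointMeasure

variable {ν : Measure ℝ} {c : ℝ → ℂ}

noncomputable def twoPointMeasure (ν : Measure ℝ) (c : ℝ → ℂ) : Measure ℂ :=
  (ν.withDensity fun r => twoPointWeight₁ (c r) r).map (fun r => circlePoint (c r) r) +
    (ν.withDensity fun r => twoPointWeight₂ (c r) r).map (fun r => -circlePoint (c r) r)

theorem Measurable.circlePoint (hc : Measurable c) : Measurable fun r => circlePoint (c r) r := by
  unfold _root_.circlePoint; fun_prop

theorem Measurable.neg_circlePoint (hc : Measurable c) :
    Measurable fun r => -_root_.circlePoint (c r) r :=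
  hc.circlePoint.neg

theorem Measurable.twoPointWeight₁ (hc : Measurable c) :
    Measurable fun r => twoPointWeight₁ (c r) r := by
  unfold _root_.twoPointWeight₁; fun_prop

theorem Measurable.twoPointWeight₂ (hc : Measurable c) :
    Measurable fun r => twoPointWeight₂ (c r) r := by
  unfold _root_.twoPointWeight₂; fun_prop

theorem twoPointMeasure_univ (hc : Measurable c) (hcν : ∀ᵐ r ∂ν, ‖c r‖ ≤ r) :
    twoPointMeasure ν c univ = ν univ := by
  rw [twoPointMeasure, Measure.add_apply, Measure.map_apply hc.circlePoint MeasurableSet.univ,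
    Measure.map_apply hc.neg_circlePoint MeasurableSet.univ]
  simp only [preimage_univ, withDensity_apply _ MeasurableSet.univ, Measure.restrict_univ]
  rw [← lintegral_add_left hc.twoPointWeight₁.coe_nnreal_ennreal, ← lintegral_one]
  refine lintegral_congr_ae (hcν.mono fun r hr => ?_)
  simp only [← ENNReal.coe_add, twoPointWeight_add hr, ENNReal.coe_one]

theorem isFiniteMeasure_twoPointMeasure [IsFiniteMeasure ν] (hc : Measurable c)
    (hcν : ∀ᵐ r ∂ν, ‖c r‖ ≤ r) : IsFiniteMeasure (twoPointMeasure ν c) :=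
  ⟨by rw [twoPointMeasure_univ hc hcν]; exact measure_lt_top ν univ⟩

theorem ae_mem_closedBall_twoPointMeasure (hc : Measurable c) {R : ℝ}
    (hcν : ∀ᵐ r ∂ν, ‖c r‖ ≤ r ∧ r ≤ R) : ∀ᵐ z ∂twoPointMeasure ν c, z ∈ closedBall 0 R := by
  have hball : ∀ᵐ r ∂ν, ∀ z, ‖z‖ = |r| → z ∈ closedBall (0 : ℂ) R := hcν.mono fun r hr z hz => by
    rw [mem_closedBall_zero_iff, hz, abs_of_nonneg ((norm_nonneg _).trans hr.1)]
    exact hr.2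
  rw [twoPointMeasure, ae_add_measure_iff]
  exact ⟨(ae_map_iff hc.circlePoint.aemeasurable measurableSet_closedBall).2
      ((withDensity_absolutelyContinuous _ _).ae_le
        (hball.mono fun r hr => hr _ norm_circlePoint)),
    (ae_map_iff hc.neg_circlePoint.aemeasurable measurableSet_closedBall).2
      ((withDensity_absolutelyContinuous _ _).ae_le
        (hball.mono fun r hr => hr _ ((norm_neg _).trans norm_circlePoint)))⟩

theorem integral_twoPointMeasure [IsFiniteMeasure ν] {A B : ℝ → ℂ} (hA : Continuous A)
    (hB : Continuous B) (hc : Measurable c) {R : ℝ} (hcν : ∀ᵐ r ∂ν, ‖c r‖ ≤ r ∧ r ≤ R) :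
    ∫ z, A ‖z‖ + B ‖z‖ * z ∂twoPointMeasure ν c = ∫ r, A r + B r * c r ∂ν := by
  set F : ℂ → ℂ := fun z => A ‖z‖ + B ‖z‖ * z
  have hF : StronglyMeasurable F := (by fun_prop : Continuous F).stronglyMeasurable
  have := isFiniteMeasure_twoPointMeasure hc (hcν.mono fun _ => And.left)
  have hρF : Integrable F (twoPointMeasure ν c) :=
    (by fun_prop : Continuous F).integrable_of_ae_mem_compact (isCompact_closedBall 0 R)
      (ae_mem_closedBall_twoPointMeasure hc hcν)
  have hρ₁F := hρF.mono_measure (Measure.le_add_right le_rfl)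
  have hρ₂F := hρF.mono_measure (Measure.le_add_left le_rfl)
  have h₁ := (integrable_map_withDensity_iff hc.twoPointWeight₁ hc.circlePoint hF).1 hρ₁F
  have h₂ := (integrable_map_withDensity_iff hc.twoPointWeight₂ hc.neg_circlePoint hF).1 hρ₂F
  rw [twoPointMeasure, integral_add_measure hρ₁F hρ₂F,
    integral_map_withDensity hc.twoPointWeight₁ hc.circlePoint hF,
    integral_map_withDensity hc.twoPointWeight₂ hc.neg_circlePoint hF, ← integral_add h₁ h₂]
  exact integral_congr_ae (hcν.mono fun r hr => twoPointWeight_smul_add_smul A B hr.1)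

end TwoPointMeasure

/-- Every compactly supported Borel probability measure on `ℂ` agrees with
some compactly supported symmetric biradial measure on all polynomials
`λ ↦ u(|λ|²) + v(|λ|²)λ`. -/
theorem stmt15 (μ : Measure ℂ) (hprob : IsProbabilityMeasure μ)
    (hK : ∃ K : Set ℂ, IsCompact K ∧ μ Kᶜ = 0) :
    ∃ (ρ : Measure ℂ) (ρ₁ ρ₂ : Measure ℝ) (φ : ℝ → ℝ),
      Measurable φ ∧
      ρ₁ (Set.Iio 0) = 0 ∧ ρ₂ (Set.Iio 0) = 0 ∧
      ρ = ρ₁.map (fun r : ℝ => (r : ℂ) * Complex.exp ((φ r : ℂ) * Complex.I)) +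
          ρ₂.map (fun r : ℝ => -((r : ℂ) * Complex.exp ((φ r : ℂ) * Complex.I))) ∧
      (∃ K : Set ℂ, IsCompact K ∧ ρ Kᶜ = 0) ∧
      ∀ u v : Polynomial ℂ,
        ∫ z, (Polynomial.eval (((‖z‖ : ℝ) : ℂ) ^ 2) u +
          Polynomial.eval (((‖z‖ : ℝ) : ℂ) ^ 2) v * z) ∂μ =
        ∫ z, (Polynomial.eval (((‖z‖ : ℝ) : ℂ) ^ 2) u +
          Polynomial.eval (((‖z‖ : ℝ) : ℂ) ^ 2) v * z) ∂ρ := by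
  obtain ⟨K, hKc, hμK⟩ := hK
  obtain ⟨R, hKR⟩ := hKc.isBounded.subset_closedBall 0
  have hμR : ∀ᵐ z ∂μ, z ∈ closedBall 0 R := measure_mono_null (compl_subset_compl.2 hKR) hμK
  set ν := μ.map (‖·‖)
  set c := circleBarycenter μ
  have hc := measurable_circleBarycenter (μ := μ)
  have hcν : ∀ᵐ r ∂ν, ‖c r‖ ≤ r ∧ r ≤ R := by
    filter_upwards [norm_circleBarycenter_le, (ae_map_iff measurable_norm.aemeasurable
      measurableSet_Iic).2 (hμR.mono fun _ hz => mem_closedBall_zero_iff.1 hz)] with r h₁ h₂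
    exact ⟨h₁, h₂⟩
  have hν₀ : ν (Iio 0) = 0 := by
    rw [Measure.map_apply measurable_norm measurableSet_Iio]
    simp [Set.preimage, not_lt.2 (norm_nonneg _)]
  refine ⟨twoPointMeasure ν c, _, _, fun r => arg (c r), by fun_prop,
    withDensity_absolutelyContinuous _ _ hν₀, withDensity_absolutelyContinuous _ _ hν₀, rfl,
    ⟨closedBall 0 R, isCompact_closedBall 0 R, ?_⟩, fun u v => ?_⟩
  · exact ae_mem_closedBall_twoPointMeasure hc hcν
  · have hpoly (p : Polynomial ℂ) : Continuous fun r : ℝ => p.eval ((r : ℂ) ^ 2) := by fun_prop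
    exact (integral_radial_add_mul_eq_integral_circleBarycenter (hpoly u) (hpoly v)
      (isCompact_closedBall 0 R) hμR).trans
      (integral_twoPointMeasure (hpoly u) (hpoly v) hc hcν).symm
end

section
/- Let ρ = Σ_{k=1}^n ρ_k δ_{λ_k} and ρ' = Σ_{k=1}^n ρ'_k δ_{λ'_k} be two discrete probability measures on ℂ with weights ρ_k, ρ'_k > 0 and distinct support points. Then ∫ λ^{⟨j⟩} dρ = ∫ λ^{⟨j⟩} dρ' for all j = 0, 1, …, 2n−1 if, for each r ≥ 0, the total mass of ρ on the circle {|λ| = r} equals that of ρ' and the centre of mass Σ_{|λ_k|=r} ρ_k λ_k equals Σ_{|λ'_k|=r} ρ'_k λ'_k. -/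
/-! Both `λ^⟨j⟩ = |λ|^j` (`j` even) and `λ^⟨j⟩ = λ · |λ|^(j-1)` (`j` odd) are a radial function
of `λ` times `1` resp. `λ`, so each moment regroups circle by circle into the per-circle masses
resp. centres of mass, weighted by a power of the radius. -/

theorem Finset.sum_mul_comp_eq_of_fiberwise_sum_eq {ι κ R : Type*} [Fintype ι] [DecidableEq κ]
    [CommSemiring R] (φ φ' : ι → κ) (g g' : ι → R)
    (h : ∀ r, ∑ i with φ i = r, g i = ∑ i with φ' i = r, g' i) (f : κ → R) :
    ∑ i, g i * f (φ i) = ∑ i, g' i * f (φ' i) := by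
  have regroup : ∀ (ψ : ι → κ) (v : ι → R), (∀ i, ψ i ∈ univ.image φ ∪ univ.image φ') →
      ∑ i, v i * f (ψ i) = ∑ r ∈ univ.image φ ∪ univ.image φ', (∑ i with ψ i = r, v i) * f r := by
    intro ψ v hψ
    rw [← sum_fiberwise_of_maps_to (g := ψ) fun i _ => hψ i]
    refine sum_congr rfl fun r _ => ?_
    rw [sum_mul]
    exact sum_congr rfl fun i hi => by rw [(mem_filter.mp hi).2]
  rw [regroup φ g fun i => by simp, regroup φ' g' fun i => by simp]
  exact sum_congr rfl fun r _ => by rw [h r]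

theorem stmt19_general (n : ℕ) (l l' : Fin n → ℂ)
    (ρ ρ' : Fin n → ℝ)
    (hmass : ∀ r : ℝ,
      ∑ k ∈ Finset.univ.filter (fun k => ‖l k‖ = r), ρ k =
      ∑ k ∈ Finset.univ.filter (fun k => ‖l' k‖ = r), ρ' k)
    (hcm : ∀ r : ℝ,
      ∑ k ∈ Finset.univ.filter (fun k => ‖l k‖ = r), (ρ k : ℂ) * l k =
      ∑ k ∈ Finset.univ.filter (fun k => ‖l' k‖ = r), (ρ' k : ℂ) * l' k) :
    ∀ j < 2 * n,
      ∑ k, (ρ k : ℂ) * (if j % 2 = 0 then ((‖l k‖ : ℝ) : ℂ) ^ j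
        else l k * ((‖l k‖ : ℝ) : ℂ) ^ (j - 1)) =
      ∑ k, (ρ' k : ℂ) * (if j % 2 = 0 then ((‖l' k‖ : ℝ) : ℂ) ^ j
        else l' k * ((‖l' k‖ : ℝ) : ℂ) ^ (j - 1)) := by
  intro j _
  by_cases hj : j % 2 = 0
  · simp only [hj, if_true]
    refine Finset.sum_mul_comp_eq_of_fiberwise_sum_eq (fun k => ‖l k‖) (fun k => ‖l' k‖)
      _ _ (fun r => ?_) fun r : ℝ => (r : ℂ) ^ j
    exact_mod_cast hmass r
  · simp only [hj, if_false, ← mul_assoc]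
    exact Finset.sum_mul_comp_eq_of_fiberwise_sum_eq (fun k => ‖l k‖) (fun k => ‖l' k‖)
      _ _ hcm fun r : ℝ => (r : ℂ) ^ (j - 1)

/-- Two discrete measures with equal per-circle masses and per-circle
centres of mass have the same moments `∫ λ^⟨j⟩` for `j = 0, …, 2n − 1`. -/
theorem stmt19 (n : ℕ) (l l' : Fin n → ℂ) (hl : Function.Injective l)
    (hl' : Function.Injective l')
    (ρ ρ' : Fin n → ℝ) (hρ : ∀ k, 0 < ρ k) (hρ' : ∀ k, 0 < ρ' k)
    (hsum : ∑ k, ρ k = 1) (hsum' : ∑ k, ρ' k = 1)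
    (hmass : ∀ r : ℝ,
      ∑ k ∈ Finset.univ.filter (fun k => ‖l k‖ = r), ρ k =
      ∑ k ∈ Finset.univ.filter (fun k => ‖l' k‖ = r), ρ' k)
    (hcm : ∀ r : ℝ,
      ∑ k ∈ Finset.univ.filter (fun k => ‖l k‖ = r), (ρ k : ℂ) * l k =
      ∑ k ∈ Finset.univ.filter (fun k => ‖l' k‖ = r), (ρ' k : ℂ) * l' k) :
    ∀ j < 2 * n,
      ∑ k, (ρ k : ℂ) * (if j % 2 = 0 then ((‖l k‖ : ℝ) : ℂ) ^ j
        else l k * ((‖l k‖ : ℝ) : ℂ) ^ (j - 1)) =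
      ∑ k, (ρ' k : ℂ) * (if j % 2 = 0 then ((‖l' k‖ : ℝ) : ℂ) ^ j
        else l' k * ((‖l' k‖ : ℝ) : ℂ) ^ (j - 1)) :=
  stmt19_general n l l' ρ ρ' hmass hcm
end
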